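/- arXiv:1910.02573 — 7 statements merged into one kernel-verified Lean document; each statement's English description precedes it below -/
import Mathlib

section
/- For vectors x, y ∈ ℝⁿ, x majorizes y if and only if y can be written as a convex combination of x and permutations of x (equivalently, y = Dx for some doubly stochastic matrix D). -/
open Finset

/-- The `i`-th largest entry (0-indexed) of the tuple `x`. -/
noncomputable def sortedDesc (n : ℕ) (x : Fin n → ℝ) : Fin n → ℝ :=
  fun i => x (Tuple.sort x i.rev)

/-- Sum of the `k` largest entries of `x`. -/
noncomputable def topSum (n : ℕ) (x : Fin n → ℝ) (k : ℕ) : ℝ :=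
  ∑ i ∈ Finset.univ.filter (fun i : Fin n => (i : ℕ) < k), sortedDesc n x i

/-- `u` majorizes `x`. -/
def Majorizes (n : ℕ) (u x : Fin n → ℝ) : Prop :=
  (∀ k, k < n → topSum n x k ≤ topSum n u k) ∧ (∑ i, x i = ∑ i, u i)

/-- `u` weakly submajorizes `x`. -/
def WeakSubmajorizes (n : ℕ) (u x : Fin n → ℝ) : Prop :=
  ∀ k, k ≤ n → topSum n x k ≤ topSum n u k

/-- Number of nonzero components. -/
noncomputable def suppCard (n : ℕ) (x : Fin n → ℝ) : ℕ :=
  (Finset.univ.filter (fun i => x i ≠ 0)).card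


/-!
Majorization by `x` is a convex condition on `y`, since each top-`k` sum is the maximum of
`∑ i ∈ S, y i` over `#S = k` and hence convex in `y`; it holds for every rearrangement `x ∘ σ`,
so it holds on their convex hull. Conversely, if `y` lay outside the hull, some linear functional
`c` would separate it from every `x ∘ σ`. But the rearrangement inequality and summation by parts
against the nonnegative differences of top-`k` sums give `⟪c, y⟫ ≤ ⟪c↓, y↓⟫ ≤ ⟪c↓, x↓⟫`, where `↓`
sorts decreasingly, and `⟪c↓, x↓⟫ = ⟪c, x ∘ σ⟫` for a suitable `σ`.
-/

theorem val_le_val_apply_of_strictMono {k n : ℕ} {g : Fin k → Fin n} (hg : StrictMono g)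
    (i : Fin k) : (i : ℕ) ≤ g i := by
  have h := card_le_card_of_injOn g (s := Iic i) (t := Iic (g i))
    (fun j hj => by simpa using hg.monotone (by simpa using hj)) hg.injective.injOn
  simpa using h

theorem filter_val_lt_eq_map_castLEEmb {n k : ℕ} (hk : k ≤ n) :
    univ.filter (fun i : Fin n => (i : ℕ) < k) = univ.map (Fin.castLEEmb hk) := by
  ext i
  simp only [mem_filter, mem_univ, true_and, mem_map, Fin.castLEEmb_apply]
  exact ⟨fun h => ⟨⟨i, h⟩, rfl⟩, by rintro ⟨j, rfl⟩; exact j.2⟩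

theorem Antitone.sum_le_sum_filter_val_lt_card {n : ℕ} {M : Type*} [AddCommMonoid M]
    [PartialOrder M] [IsOrderedAddMonoid M] {f : Fin n → M} (hf : Antitone f)
    (T : Finset (Fin n)) :
    ∑ j ∈ T, f j ≤ ∑ j ∈ univ.filter (fun i : Fin n => (i : ℕ) < #T), f j := by
  let e := T.orderIsoOfFin rfl
  have hT : #T ≤ n := by simpa using T.card_le_univ
  calc ∑ j ∈ T, f j = ∑ i : Fin #T, f (e i) :=
        ((T.sum_coe_sort f).symm.trans (Fintype.sum_equiv e.toEquiv _ _ fun _ => rfl).symm)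
    _ ≤ ∑ i : Fin #T, f (Fin.castLE hT i) := by
        refine sum_le_sum fun i _ => hf ?_
        exact val_le_val_apply_of_strictMono (fun a b hab => e.strictMono hab) i
    _ = _ := by rw [filter_val_lt_eq_map_castLEEmb hT, sum_map]; rfl

theorem sum_mul_sub_nonneg_of_antitone {a D : ℕ → ℝ} {n : ℕ}
    (ha : ∀ i, i + 1 < n → a (i + 1) ≤ a i) (hD : ∀ k ≤ n, 0 ≤ D k) (h0 : D 0 = 0)
    (hn : D n = 0) : 0 ≤ ∑ i ∈ range n, a i * (D (i + 1) - D i) := by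
  have hparts := sum_range_by_parts a (fun i => D (i + 1) - D i) n
  simp only [sum_range_sub, h0, hn, sub_zero, smul_eq_mul, mul_zero, zero_sub] at hparts
  rw [hparts, neg_nonneg]
  exact sum_nonpos fun i hi => mul_nonpos_of_nonpos_of_nonneg
    (sub_nonpos.2 (ha i (by simp at hi; omega))) (hD _ (by simp at hi; omega))

theorem mem_convexHull_of_forall_exists_sum_mul_le {ι : Type*} [Fintype ι] {K : Set (ι → ℝ)}
    (hK : K.Finite) {y : ι → ℝ} (h : ∀ c : ι → ℝ, ∃ z ∈ K, ∑ i, c i * y i ≤ ∑ i, c i * z i) :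
    y ∈ convexHull ℝ K := by
  classical
  by_contra hy
  obtain ⟨f, u, hfu, huy⟩ :=
    geometric_hahn_banach_closed_point (convex_convexHull ℝ K) (hK.isClosed_convexHull ℝ) hy
  set c : ι → ℝ := fun i => f fun j => if i = j then 1 else 0
  have hf (z : ι → ℝ) : f z = ∑ i, c i * z i := by
    simpa [c, mul_comm] using (f : (ι → ℝ) →ₗ[ℝ] ℝ).pi_apply_eq_sum_univ z
  obtain ⟨z, hzK, hz⟩ := h c
  have hzu := hfu z (subset_convexHull ℝ K hzK)
  rw [hf] at hzu huy
  linarith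

section Majorization

variable {n : ℕ}

noncomputable def descPerm (x : Fin n → ℝ) : Equiv.Perm (Fin n) :=
  Tuple.sort x * Fin.revPerm

theorem sortedDesc_eq_comp_descPerm (x : Fin n → ℝ) : sortedDesc n x = x ∘ descPerm x := rfl

theorem antitone_sortedDesc (x : Fin n → ℝ) : Antitone (sortedDesc n x) :=
  fun _ _ hij => Tuple.monotone_sort x (Fin.rev_le_rev.2 hij)

theorem sortedDesc_comp_perm (x : Fin n → ℝ) (σ : Equiv.Perm (Fin n)) :
    sortedDesc n (x ∘ σ) = sortedDesc n x :=
  funext fun i => congrFun (Tuple.comp_perm_comp_sort_eq_comp_sort (f := x) (σ := σ)) i.rev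

theorem sum_mul_le_sum_sortedDesc_mul_sortedDesc (c y : Fin n → ℝ) :
    ∑ i, c i * y i ≤ ∑ i, sortedDesc n c i * sortedDesc n y i := by
  have hmono := (antitone_sortedDesc c).monovary (antitone_sortedDesc y)
  calc ∑ i, c i * y i
      = ∑ i, sortedDesc n c (((descPerm c)⁻¹ * descPerm y) i) * sortedDesc n y i := by
        rw [← Equiv.sum_comp (descPerm y)]
        simp [sortedDesc_eq_comp_descPerm]
    _ ≤ _ := hmono.sum_comp_perm_mul_le_sum_mul

theorem topSum_succ (x : Fin n → ℝ) {k : ℕ} (hk : k < n) :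
    topSum n x (k + 1) = topSum n x k + sortedDesc n x ⟨k, hk⟩ := by
  unfold topSum
  rw [show univ.filter (fun i : Fin n => (i : ℕ) < k + 1)
      = insert (⟨k, hk⟩ : Fin n) (univ.filter (fun i : Fin n => (i : ℕ) < k)) by
    ext i; simp only [mem_filter, mem_univ, true_and, mem_insert, Fin.ext_iff]; omega]
  rw [sum_insert (by simp), add_comm]

theorem topSum_self (x : Fin n → ℝ) : topSum n x n = ∑ i, x i := by
  unfold topSum
  rw [filter_true_of_mem fun i _ => i.2, sortedDesc_eq_comp_descPerm]
  exact Equiv.sum_comp (descPerm x) x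

theorem topSum_comp_perm (x : Fin n → ℝ) (σ : Equiv.Perm (Fin n)) (k : ℕ) :
    topSum n (x ∘ σ) k = topSum n x k := by
  rw [topSum, sortedDesc_comp_perm, topSum]

theorem sum_le_topSum (x : Fin n → ℝ) (S : Finset (Fin n)) : ∑ i ∈ S, x i ≤ topSum n x #S := by
  calc ∑ i ∈ S, x i = ∑ j ∈ S.map (descPerm x).symm.toEmbedding, sortedDesc n x j := by
        simp [sum_map, sortedDesc_eq_comp_descPerm]
    _ ≤ topSum n x #(S.map (descPerm x).symm.toEmbedding) :=
        (antitone_sortedDesc x).sum_le_sum_filter_val_lt_card _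
    _ = topSum n x #S := by rw [card_map]

theorem exists_card_eq_topSum_eq_sum (x : Fin n → ℝ) {k : ℕ} (hk : k ≤ n) :
    ∃ S : Finset (Fin n), #S = k ∧ topSum n x k = ∑ i ∈ S, x i :=
  ⟨(univ.filter fun i : Fin n => (i : ℕ) < k).map (descPerm x).toEmbedding,
    by simp [Fin.card_filter_val_lt, hk], by rw [sum_map]; rfl⟩

theorem convexOn_topSum {k : ℕ} (hk : k ≤ n) :
    ConvexOn ℝ Set.univ fun x : Fin n → ℝ => topSum n x k := by
  refine ⟨convex_univ, fun y _ z _ a b ha hb _ => ?_⟩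
  obtain ⟨S, rfl, hS⟩ := exists_card_eq_topSum_eq_sum (a • y + b • z) hk
  simp only [hS, Pi.add_apply, Pi.smul_apply, smul_eq_mul, sum_add_distrib, ← mul_sum]
  gcongr <;> exact sum_le_topSum _ S

theorem majorizes_comp_perm (x : Fin n → ℝ) (σ : Equiv.Perm (Fin n)) : Majorizes n x (x ∘ σ) :=
  ⟨fun k _ => (topSum_comp_perm x σ k).le, Equiv.sum_comp σ x⟩

theorem convex_setOf_majorizes (x : Fin n → ℝ) : Convex ℝ {y | Majorizes n x y} := by
  rintro y ⟨hy, hy_sum⟩ z ⟨hz, hz_sum⟩ a b ha hb hab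
  refine ⟨fun k hk => ?_, ?_⟩
  · calc topSum n (a • y + b • z) k ≤ a • topSum n y k + b • topSum n z k :=
          (convexOn_topSum hk.le).2 trivial trivial ha hb hab
      _ ≤ a • topSum n x k + b • topSum n x k := by gcongr; exacts [hy k hk, hz k hk]
      _ = topSum n x k := Convex.combo_self hab _
  · simp only [Pi.add_apply, Pi.smul_apply, smul_eq_mul, sum_add_distrib, ← mul_sum, hy_sum,
      hz_sum]
    exact Convex.combo_self hab _

theorem Majorizes.sum_mul_sortedDesc_le {x y : Fin n → ℝ} (h : Majorizes n x y)
    {a : Fin n → ℝ} (ha : Antitone a) :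
    ∑ i, a i * sortedDesc n y i ≤ ∑ i, a i * sortedDesc n x i := by
  let a' : ℕ → ℝ := fun i => if hi : i < n then a ⟨i, hi⟩ else 0
  have sum_mul_sortedDesc_eq (w : Fin n → ℝ) : ∑ i, a i * sortedDesc n w i
      = ∑ i ∈ range n, a' i * (topSum n w (i + 1) - topSum n w i) := by
    rw [← Fin.sum_univ_eq_sum_range (fun i => a' i * (topSum n w (i + 1) - topSum n w i))]
    refine sum_congr rfl fun i _ => ?_
    simp [a', topSum_succ w i.2]
  have hD := sum_mul_sub_nonneg_of_antitone (a := a') (D := fun k => topSum n x k - topSum n y k)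
    (n := n) ?_ ?_ (by simp [topSum]) (by simp [topSum_self, h.2])
  · rw [sum_mul_sortedDesc_eq, sum_mul_sortedDesc_eq, ← sub_nonneg, ← sum_sub_distrib]
    simpa only [← mul_sub, sub_sub_sub_comm] using hD
  · intro i hi
    simp only [a', dif_pos hi, dif_pos (Nat.lt_of_succ_lt hi)]
    exact ha (Fin.mk_le_mk.2 i.le_succ)
  · intro k hk
    rcases hk.lt_or_eq with hk | rfl
    · exact sub_nonneg.2 (h.1 k hk)
    · simp [topSum_self, h.2]

theorem Majorizes.exists_perm_sum_mul_le {x y : Fin n → ℝ} (h : Majorizes n x y)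
    (c : Fin n → ℝ) : ∃ σ : Equiv.Perm (Fin n), ∑ i, c i * y i ≤ ∑ i, c i * x (σ i) := by
  refine ⟨descPerm x * (descPerm c)⁻¹, ?_⟩
  calc ∑ i, c i * y i ≤ ∑ i, sortedDesc n c i * sortedDesc n y i :=
        sum_mul_le_sum_sortedDesc_mul_sortedDesc c y
    _ ≤ ∑ i, sortedDesc n c i * sortedDesc n x i := h.sum_mul_sortedDesc_le (antitone_sortedDesc c)
    _ = ∑ i, c i * x ((descPerm x * (descPerm c)⁻¹) i) := by
        rw [← Equiv.sum_comp (descPerm c) (fun i => c i * x ((descPerm x * (descPerm c)⁻¹) i))]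
        simp [sortedDesc_eq_comp_descPerm]

end Majorization

theorem majorizes_iff_convexComb_of_permutations (n : ℕ) (x y : Fin n → ℝ) :
    Majorizes n x y ↔
      y ∈ convexHull ℝ {z : Fin n → ℝ | ∃ σ : Equiv.Perm (Fin n), z = x ∘ σ} := by
  constructor
  · intro h
    refine mem_convexHull_of_forall_exists_sum_mul_le
      ((Set.finite_range fun σ : Equiv.Perm (Fin n) => x ∘ σ).subset ?_) fun c => ?_
    · rintro _ ⟨σ, rfl⟩
      exact ⟨σ, rfl⟩
    · obtain ⟨σ, hσ⟩ := h.exists_perm_sum_mul_le c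
      exact ⟨x ∘ σ, ⟨σ, rfl⟩, hσ⟩
  · refine fun h => convexHull_min ?_ (convex_setOf_majorizes x) h
    rintro _ ⟨σ, rfl⟩
    exact majorizes_comp_perm x σ
end

section
/- Let S ⊆ ℝⁿ×ℝᵖ be sign-invariant with respect to x (i.e., (x,z) ∈ S implies (x̄,z) ∈ S whenever |x̄| = |x| componentwise). Then conv(S) = {(x,z) : ∃ u, (u,z) ∈ conv(S₀) and u ≥ |x| componentwise}, where S₀ = S ∩ (ℝⁿ₊ × ℝᵖ). -/
open Finset

/-!
Each sign pattern `ε ∈ {±1}ⁿ` acts on `ℝⁿ × ℝᵖ` linearly by `(x, z) ↦ (ε x, z)` and preserves `S`,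
so it preserves `conv S` as well. Hence every slice `{x | (x, z) ∈ conv S}` is convex and symmetric
under each coordinate reflection; changing one coordinate at a time, such a set contains the box
`{x | |x| ≤ u}` as soon as it contains `u`. This gives `⊇`, since `conv S₀ ⊆ conv S`. For `⊆`, the
right-hand side is convex and contains every `(x, z) ∈ S`, witnessed by `u = |x|`.
-/

open Function

section Slice

variable {𝕜 E F : Type*} [Semiring 𝕜] [PartialOrder 𝕜] [AddCommMonoid E] [AddCommMonoid F]
  [Module 𝕜 E] [Module 𝕜 F]

theorem Convex.slice {C : Set (E × F)} (hC : Convex 𝕜 C) (z : F) : Convex 𝕜 {x | (x, z) ∈ C} :=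
  fun _ hx _ hy a b ha hb hab => by
    simpa [Convex.combo_self hab] using hC hx hy ha hb hab

end Slice

section Box

variable {ι : Type*} {K : Set (ι → ℝ)}

theorem Convex.update_mem_of_abs_le [DecidableEq ι] (hK : Convex ℝ K)
    (hrefl : ∀ x ∈ K, ∀ k, update x k (-x k) ∈ K) {v : ι → ℝ} (hv : v ∈ K) (k : ι) {c : ℝ}
    (hc : |c| ≤ |v k|) : update v k c ∈ K := by
  have hc' : c ∈ segment ℝ (v k) (-v k) := by
    rw [segment_eq_uIcc, Set.mem_uIcc]
    rcases abs_cases (v k) with ⟨h, -⟩ | ⟨h, -⟩ <;> rw [h, abs_le] at hc <;>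
      [right; left] <;> constructor <;> linarith [hc.1, hc.2]
  have hseg := Pi.image_update_segment (𝕜 := ℝ) k (v k) (-v k) v
  rw [update_eq_self] at hseg
  exact hK.segment_subset hv (hrefl v hv k) (hseg ▸ Set.mem_image_of_mem _ hc')

theorem Convex.mem_of_abs_le [Fintype ι] [DecidableEq ι] (hK : Convex ℝ K)
    (hrefl : ∀ x ∈ K, ∀ k, update x k (-x k) ∈ K) {u x : ι → ℝ} (hu : u ∈ K)
    (hxu : ∀ i, |x i| ≤ u i) : x ∈ K := by
  suffices h : ∀ s : Finset ι, s.piecewise x u ∈ K by simpa using h Finset.univ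
  intro s
  induction s using Finset.induction_on with
  | empty => simpa using hu
  | insert j s hj ih =>
    rw [Finset.piecewise_insert]
    refine hK.update_mem_of_abs_le hrefl ih j ?_
    rw [Finset.piecewise_eq_of_notMem _ _ _ hj]
    exact (hxu j).trans (le_abs_self _)

end Box

section SignInvariant

variable {ι F : Type*}

def IsSignInvariant (S : Set ((ι → ℝ) × F)) : Prop :=
  ∀ x z, (x, z) ∈ S → ∀ x' : ι → ℝ, (∀ i, |x' i| = |x i|) → (x', z) ∈ S

theorem IsSignInvariant.convexHull [AddCommGroup F] [Module ℝ F] {S : Set ((ι → ℝ) × F)}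
    (hS : IsSignInvariant S) : IsSignInvariant (convexHull ℝ S) := by
  classical
  intro x z hxz x' hx'
  let ε : ι → ℝ := fun i => if x' i = x i then 1 else -1
  let L := (LinearMap.mulLeft ℝ ε).prodMap (LinearMap.id : F →ₗ[ℝ] F)
  have hLS : L '' S ⊆ S := by
    rintro _ ⟨⟨y, w⟩, hyw, rfl⟩
    refine hS y w hyw _ fun i => ?_
    by_cases h : x' i = x i <;> simp [ε, h]
  have hLx : L (x, z) = (x', z) := by
    refine Prod.ext (funext fun i => ?_) rfl
    show ε i * x i = x' i
    by_cases h : x' i = x i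
    · simp [ε, h]
    · rw [(abs_eq_abs.mp (hx' i)).resolve_left h]
      simp [ε, h]
  rw [← hLx]
  exact convexHull_mono hLS (L.image_convexHull S ▸ Set.mem_image_of_mem L hxz)

theorem IsSignInvariant.update_neg_mem {S : Set ((ι → ℝ) × F)} (hS : IsSignInvariant S)
    [DecidableEq ι] {x : ι → ℝ} {z : F} (hx : (x, z) ∈ S) (k : ι) :
    (update x k (-x k), z) ∈ S :=
  hS x z hx _ fun i => by by_cases h : i = k <;> simp [h]

end SignInvariant

theorem Convex.setOf_exists_abs_le {ι F : Type*} [AddCommGroup F] [Module ℝ F]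
    {D : Set ((ι → ℝ) × F)} (hD : Convex ℝ D) :
    Convex ℝ {q : (ι → ℝ) × F | ∃ u : ι → ℝ, (u, q.2) ∈ D ∧ ∀ i, |q.1 i| ≤ u i} := by
  rintro ⟨x, z⟩ ⟨u, hu, hxu⟩ ⟨x', z'⟩ ⟨u', hu', hxu'⟩ a b ha hb hab
  refine ⟨a • u + b • u', by simpa using hD hu hu' ha hb hab, fun i => ?_⟩
  simp only [Prod.fst_add, Prod.smul_fst, Pi.add_apply, Pi.smul_apply, smul_eq_mul]
  calc |a * x i + b * x' i| ≤ a * |x i| + b * |x' i| := by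
        simpa [abs_mul, abs_of_nonneg ha, abs_of_nonneg hb] using abs_add_le (a * x i) (b * x' i)
    _ ≤ a * u i + b * u' i := by gcongr <;> [exact hxu i; exact hxu' i]

theorem convexHull_sign_invariant (n p : ℕ)
    (S : Set ((Fin n → ℝ) × (Fin p → ℝ)))
    (hS : ∀ x z, (x, z) ∈ S → ∀ x' : Fin n → ℝ, (∀ i, |x' i| = |x i|) → (x', z) ∈ S) :
    convexHull ℝ S =
      {q : (Fin n → ℝ) × (Fin p → ℝ) | ∃ u : Fin n → ℝ,
        (u, q.2) ∈ convexHull ℝ (S ∩ {r | ∀ i, 0 ≤ r.1 i}) ∧ ∀ i, |q.1 i| ≤ u i} := by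
  refine Set.Subset.antisymm (convexHull_min ?_ (convex_convexHull ℝ _).setOf_exists_abs_le) ?_
  · intro q hq
    exact ⟨fun i => |q.1 i|,
      subset_convexHull ℝ _ ⟨hS _ _ hq _ fun i => abs_abs _, fun i => abs_nonneg _⟩,
      fun i => le_rfl⟩
  · rintro ⟨x, z⟩ ⟨u, hu, hxu⟩
    have hhull : IsSignInvariant (convexHull ℝ S) := IsSignInvariant.convexHull hS
    exact ((convex_convexHull ℝ S).slice z).mem_of_abs_le
      (fun y hy k => hhull.update_neg_mem hy k) (convexHull_mono Set.inter_subset_left hu) hxu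
end

section
/- If card(x) ≤ K then ‖x‖_c = ‖x‖_s, where ‖·‖_c is the gauge (Minkowski functional) of conv(N), N = {x : ‖x‖_s ≤ 1, card(x) ≤ K}, and ‖·‖_s is a sign- and permutation-invariant norm. -/
open Finset

theorem gauge_eq_norm_of_card_le (n K : ℕ) (hK1 : 1 < K) (hKn : K < n)
    (f : (Fin n → ℝ) → ℝ)
    (hadd : ∀ a b, f (a + b) ≤ f a + f b)
    (hsmul : ∀ (c : ℝ) (a : Fin n → ℝ), f (c • a) = |c| * f a)
    (hdef : ∀ a, f a = 0 → a = 0)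
    (hperm : ∀ (σ : Equiv.Perm (Fin n)) (a : Fin n → ℝ), f (a ∘ σ) = f a)
    (hsign : ∀ a b : Fin n → ℝ, (∀ i, |a i| = |b i|) → f a = f b)
    (x : Fin n → ℝ) (hx : suppCard n x ≤ K) :
    gauge (convexHull ℝ {y : Fin n → ℝ | f y ≤ 1 ∧ suppCard n y ≤ K}) x = f x := by
  classical
  set N : Set (Fin n → ℝ) := {y : Fin n → ℝ | f y ≤ 1 ∧ suppCard n y ≤ K} with hN
  set C := convexHull ℝ N with hC
  have hf0 : f 0 = 0 := by
    have := hsmul 0 0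
    simpa using this
  have hnonneg : ∀ a, 0 ≤ f a := by
    intro a
    have hneg : f (-a) = f a := by
      have := hsmul (-1) a; simpa using this
    have h := hadd a (-a)
    simp only [add_neg_cancel, hf0, hneg] at h
    linarith
  rcases eq_or_lt_of_le (hnonneg x) with h0 | hpos
  · have hx0 : x = 0 := hdef x h0.symm
    simp [hx0, gauge_zero, hf0]
  · -- f x > 0
    have hfx : f x ≠ 0 := ne_of_gt hpos
    have hmemN : (f x)⁻¹ • x ∈ N := by
      constructor
      · rw [hsmul]
        rw [abs_of_pos (inv_pos.mpr hpos)]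
        rw [inv_mul_cancel₀ hfx]
      · have : suppCard n ((f x)⁻¹ • x) = suppCard n x := by
          unfold suppCard
          congr 1
          apply Finset.filter_congr
          intro i _
          simp [Pi.smul_apply, smul_eq_mul, inv_ne_zero hfx]
        omega
    have hmemC : (f x)⁻¹ • x ∈ C := subset_convexHull ℝ N hmemN
    have hsub : C ⊆ {y | f y ≤ 1} := by
      apply convexHull_min
      · intro y hy; exact hy.1
      · intro a ha b hb s t hs ht hst
        have h1 : f (s • a + t • b) ≤ f (s • a) + f (t • b) := hadd _ _
        rw [hsmul, hsmul, abs_of_nonneg hs, abs_of_nonneg ht] at h1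
        have : s * f a + t * f b ≤ s * 1 + t * 1 := by
          apply add_le_add
          · exact mul_le_mul_of_nonneg_left ha hs
          · exact mul_le_mul_of_nonneg_left hb ht
        simp only [Set.mem_setOf_eq]
        calc f (s • a + t • b) ≤ s * f a + t * f b := h1
          _ ≤ s * 1 + t * 1 := this
          _ = 1 := by linarith
    apply le_antisymm
    · apply gauge_le_of_mem (le_of_lt hpos)
      rw [Set.mem_smul_set_iff_inv_smul_mem₀ hfx]
      exact hmemC
    · rw [gauge_def]
      refine le_csInf ⟨f x, hpos, (Set.mem_smul_set_iff_inv_smul_mem₀ hfx _ _).mpr hmemC⟩ ?_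
      intro t ht
      obtain ⟨ht0, htm⟩ := ht
      have ht0 : (0:ℝ) < t := ht0
      have : f (t⁻¹ • x) ≤ 1 := hsub ((Set.mem_smul_set_iff_inv_smul_mem₀ (ne_of_gt ht0) _ _).mp htm)
      rw [hsmul, abs_of_pos (inv_pos.mpr ht0)] at this
      calc f x = t * (t⁻¹ * f x) := by field_simp
        _ ≤ t * 1 := mul_le_mul_of_nonneg_left this (le_of_lt ht0)
        _ = t := mul_one t
end

section
/- Fix x ∈ ℝⁿ and 1 < K < n, and define s(x), i_x, δ(x), u(x) as follows: s(x)ᵢ = (Σ_{j=i}ⁿ |x|_[j])/(K−i+1), i_x the smallest minimizer of s(x), δ(x) = s(x)_{i_x}, u(x)ᵢ = |x|_[i] for i < i_x, δ(x) for i_x ≤ i ≤ K, and 0 otherwise. Then u(x)₁ = max{|x|_[1], s(x)₁}. -/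
open Finset

theorem ux_first_entry (n K : ℕ) (hK1 : 1 < K) (hKn : K < n) (x : Fin n → ℝ)
    (s : ℕ → ℝ)
    (hs : ∀ i : ℕ, s i =
      (∑ j ∈ Finset.univ.filter (fun j : Fin n => i ≤ (j : ℕ) + 1),
        sortedDesc n (fun t => |x t|) j) / ((K : ℝ) - i + 1))
    (ix : ℕ) (hix1 : 1 ≤ ix) (hix2 : ix ≤ K)
    (hmin : ∀ j, 1 ≤ j → j ≤ K → s ix ≤ s j)
    (hleast : ∀ j, 1 ≤ j → j < ix → s ix < s j)
    (u : Fin n → ℝ)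
    (hu : ∀ i : Fin n, u i =
      if (i : ℕ) + 1 < ix then sortedDesc n (fun t => |x t|) i
      else if (i : ℕ) + 1 ≤ K then s ix else 0) :
    u ⟨0, by omega⟩ = max (sortedDesc n (fun t => |x t|) ⟨0, by omega⟩) (s 1) := by
  have hn0 : 0 < n := by omega
  set a : Fin n → ℝ := sortedDesc n (fun t => |x t|) with ha_def
  have ha0 : ∀ j : Fin n, a j ≤ a ⟨0, hn0⟩ := by
    intro j
    have hm := Tuple.monotone_sort (fun t => |x t|)
    exact hm (by rw [Fin.rev_le_rev]; exact Fin.mk_le_of_le_val (Nat.zero_le _))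
  set T : ℕ → ℝ := fun i => ∑ j ∈ Finset.univ.filter (fun j : Fin n => i ≤ (j : ℕ) + 1), a j
    with hT_def
  have hsT : ∀ i, s i = T i / ((K : ℝ) - i + 1) := fun i => hs i
  have hT1 : T 1 = ∑ j, a j := by
    simp only [hT_def]
    congr 1
    refine Finset.filter_true_of_mem fun j _ => by omega
  have hKpos : (0:ℝ) < K := by positivity
  have hs1 : s 1 = T 1 / K := by rw [hsT]; norm_num
  rcases eq_or_lt_of_le hix1 with h1 | h2
  · -- case ix = 1 : u 0 = s 1, need a 0 ≤ s 1
    have hT2 : T 1 = a ⟨0, hn0⟩ + T 2 := by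
      have hset : Finset.univ.filter (fun j : Fin n => 2 ≤ (j : ℕ) + 1)
          = Finset.univ.erase ⟨0, hn0⟩ := by
        ext j
        simp [Fin.ext_iff]
        omega
      have huniv : Finset.univ.filter (fun j : Fin n => 1 ≤ (j : ℕ) + 1) = Finset.univ :=
        Finset.filter_true_of_mem fun j _ => by omega
      simp only [hT_def, hset, huniv]
      rw [Finset.add_sum_erase _ _ (Finset.mem_univ _)]
    have hs12 : s 1 ≤ s 2 := by
      have := hmin 2 (by omega) hK1
      rwa [← h1] at this
    have hs2 : s 2 = T 2 / ((K:ℝ) - 1) := by rw [hsT]; norm_num; ring_nf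
    have hK1R : (0:ℝ) < (K:ℝ) - 1 := by
      have : (2:ℝ) ≤ K := by exact_mod_cast hK1
      linarith
    have key : a ⟨0, hn0⟩ ≤ s 1 := by
      rw [hs1, hs2] at hs12
      rw [hs1]
      rw [div_le_div_iff₀ hKpos hK1R] at hs12
      rw [le_div_iff₀ hKpos]
      nlinarith [hT2]
    rw [hu, max_eq_right key]
    have hv : ((⟨0, hn0⟩ : Fin n) : ℕ) = 0 := rfl
    rw [hv, if_neg (by omega), if_pos (by omega), ← h1]
  · -- case 2 ≤ ix : u 0 = a 0, need s 1 ≤ a 0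
    have hsx1 : s ix < s 1 := hleast 1 le_rfl h2
    have hdx : (0:ℝ) < (K:ℝ) - ix + 1 := by
      have : (ix:ℝ) ≤ K := by exact_mod_cast hix2
      linarith
    have hTx : T ix = ((K:ℝ) - ix + 1) * s ix := by
      rw [hsT, mul_div_cancel₀ _ (ne_of_gt hdx)]
    have hmlt : ix - 1 < n := by omega
    have hsplit : T 1 = T ix + ∑ j ∈ Finset.univ.filter (fun j : Fin n => ¬ ix ≤ (j:ℕ)+1), a j := by
      have huniv : Finset.univ.filter (fun j : Fin n => 1 ≤ (j : ℕ) + 1) = Finset.univ :=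
        Finset.filter_true_of_mem fun j _ => by omega
      simp only [hT_def, huniv]
      rw [Finset.sum_filter_add_sum_filter_not]
    have hsetR : Finset.univ.filter (fun j : Fin n => ¬ ix ≤ (j:ℕ)+1)
        = Finset.Iio (⟨ix - 1, hmlt⟩ : Fin n) := by
      ext j
      simp [Fin.lt_def]
      omega
    have hcard : (Finset.univ.filter (fun j : Fin n => ¬ ix ≤ (j:ℕ)+1)).card = ix - 1 := by
      rw [hsetR, Fin.card_Iio]
    have hRbound : ∑ j ∈ Finset.univ.filter (fun j : Fin n => ¬ ix ≤ (j:ℕ)+1), a j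
        ≤ (ix - 1 : ℕ) * a ⟨0, hn0⟩ := by
      calc ∑ j ∈ Finset.univ.filter (fun j : Fin n => ¬ ix ≤ (j:ℕ)+1), a j
          ≤ (Finset.univ.filter (fun j : Fin n => ¬ ix ≤ (j:ℕ)+1)).card • a ⟨0, hn0⟩ :=
            Finset.sum_le_card_nsmul _ _ _ (fun j _ => ha0 j)
        _ = (ix - 1 : ℕ) * a ⟨0, hn0⟩ := by rw [hcard, nsmul_eq_mul]
    have hix1R : (1:ℝ) ≤ ((ix:ℝ) - 1) := by
      have : (2:ℝ) ≤ ix := by exact_mod_cast h2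
      linarith
    have hcast : ((ix - 1 : ℕ) : ℝ) = (ix:ℝ) - 1 := by
      push_cast [Nat.cast_sub hix1]; ring
    have key : s 1 ≤ a ⟨0, hn0⟩ := by
      have hKs1 : (K:ℝ) * s 1 = T 1 := by
        rw [hs1, mul_div_cancel₀ _ (ne_of_gt hKpos)]
      have hlt : (K:ℝ) * s 1 < ((K:ℝ) - ix + 1) * s 1 + ((ix:ℝ) - 1) * a ⟨0, hn0⟩ := by
        rw [hKs1, hsplit, hTx]
        have h1' : ((K:ℝ) - ix + 1) * s ix ≤ ((K:ℝ) - ix + 1) * s 1 :=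
          mul_le_mul_of_nonneg_left (le_of_lt hsx1) (le_of_lt hdx)
        have h2' := hRbound
        rw [hcast] at h2'
        -- need strict: combine
        nlinarith [mul_lt_mul_of_pos_left hsx1 hdx]
      nlinarith
    rw [hu, max_eq_left key]
    have hv : ((⟨0, hn0⟩ : Fin n) : ℕ) = 0 := rfl
    rw [hv, if_pos (by omega)]
end

section
/- Fix x ∈ ℝⁿ and 1 < K < n. With s(x)ᵢ = (Σ_{j=i}ⁿ |x|_[j])/(K−i+1) and the convention |x|_[0] = ∞, there is a unique integer r ∈ {0,...,K−1} satisfying |x|_[K−r−1] > s(x)_{K−r} ≥ |x|_[K−r], and it equals K − i_x, where i_x is the smallest minimizer of s(x) over {1,...,K}. -/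
open Finset

lemma sortedDesc_antitone (n : ℕ) (f : Fin n → ℝ) : Antitone (sortedDesc n f) := by
  intro a b hab
  exact Tuple.monotone_sort f (Fin.rev_le_rev.mpr hab)

theorem unique_r_eq_K_sub_ix (n K : ℕ) (hK1 : 1 < K) (hKn : K < n) (x : Fin n → ℝ)
    (s : ℕ → ℝ)
    (hs : ∀ i : ℕ, s i =
      (∑ j ∈ Finset.univ.filter (fun j : Fin n => i ≤ (j : ℕ) + 1),
        sortedDesc n (fun t => |x t|) j) / ((K : ℝ) - i + 1))
    (ix : ℕ) (hix1 : 1 ≤ ix) (hix2 : ix ≤ K)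
    (hmin : ∀ j, 1 ≤ j → j ≤ K → s ix ≤ s j)
    (hleast : ∀ j, 1 ≤ j → j < ix → s ix < s j) :
    ∀ r : ℕ, r ≤ K - 1 →
      (((K - r - 1 = 0 ∨ s (K - r) < sortedDesc n (fun t => |x t|) ⟨K - r - 2, by omega⟩) ∧
        sortedDesc n (fun t => |x t|) ⟨K - r - 1, by omega⟩ ≤ s (K - r)) ↔ r = K - ix) := by
  set D : ℕ → ℝ := fun k => if h : k < n then sortedDesc n (fun t => |x t|) ⟨k, h⟩ else 0 with hD
  have hDval : ∀ (k : ℕ) (h : k < n), D k = sortedDesc n (fun t => |x t|) ⟨k, h⟩ := by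
    intro k h; simp [hD, h]
  have Dnn : ∀ k, 0 ≤ D k := by
    intro k
    by_cases h : k < n
    · rw [hDval k h]; exact abs_nonneg _
    · simp [hD, h]
  have Dmono : ∀ a b : ℕ, a ≤ b → D b ≤ D a := by
    intro a b hab
    by_cases hb : b < n
    · rw [hDval b hb, hDval a (lt_of_le_of_lt hab hb)]
      exact sortedDesc_antitone n _ (by simpa using hab)
    · calc D b = 0 := by simp [hD, hb]
        _ ≤ D a := Dnn a
  set T : ℕ → ℝ := fun i => ∑ j ∈ Finset.univ.filter (fun j : Fin n => i ≤ (j : ℕ) + 1),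
      sortedDesc n (fun t => |x t|) j with hT
  have hsT : ∀ i : ℕ, s i = T i / ((K : ℝ) - i + 1) := hs
  have Tnn : ∀ i, 0 ≤ T i := by
    intro i
    exact Finset.sum_nonneg fun j _ => abs_nonneg _
  have Tsplit : ∀ i : ℕ, 1 ≤ i → i ≤ n → T i = D (i - 1) + T (i + 1) := by
    intro i h1 h2
    have hin : i - 1 < n := by omega
    have hset : Finset.univ.filter (fun j : Fin n => i ≤ (j : ℕ) + 1) =
        insert ⟨i - 1, hin⟩ (Finset.univ.filter (fun j : Fin n => i + 1 ≤ (j : ℕ) + 1)) := by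
      ext j
      simp only [Finset.mem_filter, Finset.mem_univ, true_and, Finset.mem_insert,
        Fin.ext_iff]
      omega
    rw [hT]
    simp only [hset]
    rw [Finset.sum_insert (by simp; omega)]
    rw [hDval (i - 1) hin]
  -- key equivalences
  have Elem : ∀ j : ℕ, 1 ≤ j → j ≤ K - 1 →
      ((s j ≤ s (j + 1) ↔ D (j - 1) ≤ s j) ∧ (D (j - 1) ≤ s j ↔ D (j - 1) ≤ s (j + 1))) := by
    intro j h1 h2
    have hm : (0 : ℝ) < (K : ℝ) - j := by
      have : (j : ℝ) < K := by exact_mod_cast (by omega : j < K)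
      linarith
    have hm1 : (0 : ℝ) < (K : ℝ) - j + 1 := by linarith
    have hsj : s j = (D (j - 1) + T (j + 1)) / ((K : ℝ) - j + 1) := by
      rw [hsT j, Tsplit j h1 (by omega)]
    have hsj1 : s (j + 1) = T (j + 1) / ((K : ℝ) - j) := by
      rw [hsT (j + 1)]; push_cast; ring_nf
    constructor
    · rw [hsj, hsj1, div_le_div_iff₀ hm1 hm, le_div_iff₀ hm1]
      constructor <;> intro h <;> nlinarith
    · rw [hsj, hsj1, le_div_iff₀ hm1, le_div_iff₀ hm]
      constructor <;> intro h <;> nlinarith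
  -- upward propagation
  have up : ∀ i : ℕ, 1 ≤ i → i ≤ K → D (i - 1) ≤ s i →
      ∀ j, i ≤ j → j ≤ K → s i ≤ s j ∧ D (j - 1) ≤ s j := by
    intro i hi1 hi2 hbase j hj1 hj2
    induction j with
    | zero => omega
    | succ m ih =>
      rcases Nat.lt_or_ge i (m + 1) with h | h
      · have hm : i ≤ m := by omega
        obtain ⟨hA, hB⟩ := ih hm (by omega)
        have hE := Elem m (by omega) (by omega)
        have h1 : s m ≤ s (m + 1) := hE.1.mpr hB
        have h2 : D (m - 1) ≤ s (m + 1) := hE.2.mp hB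
        exact ⟨le_trans hA h1, le_trans (Dmono (m - 1) m (by omega)) h2⟩
      · have : i = m + 1 := by omega
        subst this
        exact ⟨le_refl _, hbase⟩
  -- downward propagation
  have down : ∀ i : ℕ, 2 ≤ i → i ≤ K → s i < D (i - 2) →
      ∀ j, 1 ≤ j → j < i → s i < s j ∧ s j < D (j - 1) := by
    intro i hi1 hi2 hbase
    have main : ∀ m : ℕ, ∀ j, 1 ≤ j → j < i → i - j ≤ m + 1 → s i < s j ∧ s j < D (j - 1) := by
      intro m
      induction m with
      | zero =>
        intro j hj1 hj2 hj3
        have : j = i - 1 := by omega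
        subst this
        have hE := Elem (i - 1) (by omega) (by omega)
        have e1 : i - 1 + 1 = i := by omega
        rw [e1] at hE
        have hd : ¬ D (i - 1 - 1) ≤ s i := by
          rw [not_le]
          have : i - 1 - 1 = i - 2 := by omega
          rw [this]; exact hbase
        have h1 : ¬ D (i - 1 - 1) ≤ s (i - 1) := fun h => hd (hE.2.mp h)
        have h2 : ¬ s (i - 1) ≤ s i := fun h => hd (hE.2.mp (hE.1.mp h))
        exact ⟨not_le.mp h2, not_le.mp h1⟩
      | succ m ih =>
        intro j hj1 hj2 hj3
        rcases Nat.lt_or_ge (i - j) (m + 2) with h | h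
        · exact ih j hj1 hj2 (by omega)
        · have hj : j + 1 < i := by omega
          obtain ⟨hA, hB⟩ := ih (j + 1) (by omega) hj (by omega)
          have hB' : s (j + 1) < D (j - 1) :=
            lt_of_lt_of_le hB (Dmono (j - 1) (j + 1 - 1) (by omega))
          have hE := Elem j (by omega) (by omega)
          have h1 : ¬ D (j - 1) ≤ s j := fun hh => absurd (hE.2.mp hh) (not_le.mpr hB')
          have h2 : ¬ s j ≤ s (j + 1) := fun hh => h1 (hE.1.mp hh)
          exact ⟨lt_trans hA (not_le.mp h2), not_le.mp h1⟩
    intro j hj1 hj2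
    exact main (i - j) j hj1 hj2 (by omega)
  -- s K ≥ D (K-1)
  have hK : D (K - 1) ≤ s K := by
    have : s K = T K := by
      rw [hsT K]
      have : (K : ℝ) - K + 1 = 1 := by ring
      rw [this, div_one]
    rw [this, Tsplit K (by omega) (by omega)]
    nlinarith [Tnn (K + 1)]
  intro r hr
  have hfin1 : K - r - 1 < n := by omega
  have hfin2 : K - r - 2 < n := by omega
  have hD1 : sortedDesc n (fun t => |x t|) ⟨K - r - 1, hfin1⟩ = D (K - r - 1) :=
    (hDval _ hfin1).symm
  have hD2 : sortedDesc n (fun t => |x t|) ⟨K - r - 2, hfin2⟩ = D (K - r - 2) :=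
    (hDval _ hfin2).symm
  rw [hD1, hD2]
  constructor
  · rintro ⟨h1, h2⟩
    -- i := K - r, show r = K - ix
    set i := K - r with hi
    have hi1 : 1 ≤ i := by omega
    have hi2 : i ≤ K := by omega
    have hup := up i hi1 hi2 (by rwa [hi] at h2 ⊢)
    have hixi : ix = i := by
      by_contra hne
      rcases Nat.lt_or_ge ix i with hlt | hge
      · rcases h1 with h1 | h1
        · omega
        · have hd := down i (by omega) hi2 h1 ix hix1 hlt
          exact absurd (hmin i hi1 hi2) (not_le.mpr hd.1)
      · have hlt : i < ix := by omega
        have := hleast i hi1 hlt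
        exact absurd (hup ix (by omega) hix2).1 (not_le.mpr this)
    omega
  · intro hr2
    have hieq : K - r = ix := by omega
    rw [hieq]
    constructor
    · rcases Nat.eq_or_lt_of_le hix1 with h | h
      · left; omega
      · right
        have hE := Elem (ix - 1) (by omega) (by omega)
        have e1 : ix - 1 + 1 = ix := by omega
        rw [e1] at hE
        have hlt := hleast (ix - 1) (by omega) (by omega)
        have h1 : ¬ D (ix - 1 - 1) ≤ s (ix - 1) := fun hh =>
          absurd (hE.1.mpr hh) (not_le.mpr hlt)
        have h2 : ¬ D (ix - 1 - 1) ≤ s ix := fun hh => h1 ((hE.2).mpr hh)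
        rw [show ix - 1 - 1 = ix - 2 from by omega] at h2
        exact not_le.mp h2
    · rcases Nat.eq_or_lt_of_le hix2 with h | h
      · rw [h]; exact hK
      · have hE := Elem ix hix1 (by omega)
        have hle := hmin (ix + 1) (by omega) (by omega)
        exact hE.1.mp hle
end

section
/- The K-support norm satisfies: ‖x‖ᵏ_sp = (Σ_{i=1}^{K−r−1} |x|_[i]² + (1/(r+1))·(Σ_{i=K−r}ⁿ |x|_[i])²)^{1/2}, where r is the unique integer in {0,...,K−1} with |x|_[K−r−1] > (Σ_{j=K−r}ⁿ |x|_[j])/(r+1) ≥ |x|_[K−r] (with |x|_[0] = ∞). -/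
set_option maxHeartbeats 1000000

open Finset
open scoped Pointwise

lemma sum_boolean {d : ℕ} (t : Finset (Fin d)) (w : Fin d → ℝ)
    (hw : ∀ i, w i = 0 ∨ w i = 1) :
    ∑ i ∈ t, w i = ((t.filter (fun i => w i = 1)).card : ℝ) := by
  rw [← Finset.sum_filter_add_sum_filter_not t (fun i => w i = 1) w]
  have h1 : ∑ i ∈ t.filter (fun i => w i = 1), w i
      = ((t.filter (fun i => w i = 1)).card : ℝ) := by
    rw [Finset.sum_congr rfl (fun i hi => (Finset.mem_filter.1 hi).2)]
    simp
  have h2 : ∑ i ∈ t.filter (fun i => ¬ w i = 1), w i = 0 := by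
    apply Finset.sum_eq_zero
    intro i hi
    rcases hw i with h | h
    · exact h
    · exact absurd h (Finset.mem_filter.1 hi).2
  rw [h1, h2, add_zero]

/-- Capped cube lemma: a vector with entries in `[0,1]` and sum at most `s`
is a convex combination of `0-1` vectors with sum at most `s`. -/
lemma mem_convexHull_boolean_cap (d s : ℕ) :
    ∀ (N : ℕ) (v : Fin d → ℝ),
    (univ.filter (fun i => v i ≠ 0 ∧ v i ≠ 1)).card ≤ N →
    (∀ i, 0 ≤ v i) → (∀ i, v i ≤ 1) → (∑ i, v i) ≤ (s : ℝ) →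
    v ∈ convexHull ℝ {w : Fin d → ℝ | (∀ i, w i = 0 ∨ w i = 1) ∧ (∑ i, w i) ≤ (s : ℝ)} := by
  intro N
  induction N with
  | zero =>
    intro v hcard h0 h1 hsum
    apply subset_convexHull
    refine ⟨fun i => ?_, hsum⟩
    by_contra hi
    push_neg at hi
    have : i ∈ univ.filter (fun i => v i ≠ 0 ∧ v i ≠ 1) := by
      simp [hi.1, hi.2]
    have := Finset.card_pos.2 ⟨i, this⟩
    omega
  | succ N ih =>
    intro v hcard h0 h1 hsum
    by_cases hFe : (univ.filter (fun i => v i ≠ 0 ∧ v i ≠ 1)) = ∅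
    · apply subset_convexHull
      refine ⟨fun i => ?_, hsum⟩
      by_contra hi
      push_neg at hi
      have : i ∈ univ.filter (fun i => v i ≠ 0 ∧ v i ≠ 1) := by simp [hi.1, hi.2]
      simp [hFe] at this
    · obtain ⟨i, hi⟩ := Finset.nonempty_of_ne_empty hFe
      have hi' : v i ≠ 0 ∧ v i ≠ 1 := by simpa using hi
      have hi0 : 0 < v i := lt_of_le_of_ne (h0 i) (Ne.symm hi'.1)
      have hi1 : v i < 1 := lt_of_le_of_ne (h1 i) hi'.2
      have hconv := convex_convexHull ℝ
        {w : Fin d → ℝ | (∀ i, w i = 0 ∨ w i = 1) ∧ (∑ i, w i) ≤ (s : ℝ)}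
      by_cases hj : ∃ j ∈ (univ.filter (fun i => v i ≠ 0 ∧ v i ≠ 1)), j ≠ i
      · obtain ⟨j, hjF, hji⟩ := hj
        have hj' : v j ≠ 0 ∧ v j ≠ 1 := by simpa using hjF
        have hj0 : 0 < v j := lt_of_le_of_ne (h0 j) (Ne.symm hj'.1)
        have hj1 : v j < 1 := lt_of_le_of_ne (h1 j) hj'.2
        set a := min (1 - v i) (v j) with ha
        set b := min (v i) (1 - v j) with hb
        have ha0 : 0 < a := lt_min (by linarith) hj0
        have hb0 : 0 < b := lt_min hi0 (by linarith)
        have hai : a ≤ 1 - v i := min_le_left _ _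
        have haj : a ≤ v j := min_le_right _ _
        have hbi : b ≤ v i := min_le_left _ _
        have hbj : b ≤ 1 - v j := min_le_right _ _
        set dlt : Fin d → ℝ := fun k =>
          (if k = i then (1:ℝ) else 0) - (if k = j then (1:ℝ) else 0) with hdlt
        set vp : Fin d → ℝ := fun k => v k + a * dlt k with hvp
        set vm : Fin d → ℝ := fun k => v k - b * dlt k with hvm
        have hdlti : dlt i = 1 := by simp [hdlt, hji.symm]
        have hdltj : dlt j = -1 := by simp [hdlt, hji]
        have hdlt0 : ∀ k, k ≠ i → k ≠ j → dlt k = 0 := by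
          intro k hk1 hk2; simp [hdlt, hk1, hk2]
        have hcases : ∀ k : Fin d, (k = i) ∨ (k = j) ∨ dlt k = 0 := by
          intro k
          by_cases hk1 : k = i
          · exact Or.inl hk1
          by_cases hk2 : k = j
          · exact Or.inr (Or.inl hk2)
          · exact Or.inr (Or.inr (hdlt0 k hk1 hk2))
        have hsumdlt : ∑ k, dlt k = 0 := by
          simp [hdlt, Finset.sum_sub_distrib]
        have hvp0 : ∀ k, 0 ≤ vp k := by
          intro k
          rcases hcases k with hk | hk | hk
          · rw [hvp]; simp only; rw [hk, hdlti]; nlinarith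
          · rw [hvp]; simp only; rw [hk, hdltj]; nlinarith
          · rw [hvp]; simp only [hk]; simpa using h0 k
        have hvp1 : ∀ k, vp k ≤ 1 := by
          intro k
          rcases hcases k with hk | hk | hk
          · rw [hvp]; simp only; rw [hk, hdlti]; nlinarith
          · rw [hvp]; simp only; rw [hk, hdltj]; nlinarith
          · rw [hvp]; simp only [hk]; simpa using h1 k
        have hvm0 : ∀ k, 0 ≤ vm k := by
          intro k
          rcases hcases k with hk | hk | hk
          · rw [hvm]; simp only; rw [hk, hdlti]; nlinarith
          · rw [hvm]; simp only; rw [hk, hdltj]; nlinarith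
          · rw [hvm]; simp only [hk]; simpa using h0 k
        have hvm1 : ∀ k, vm k ≤ 1 := by
          intro k
          rcases hcases k with hk | hk | hk
          · rw [hvm]; simp only; rw [hk, hdlti]; nlinarith
          · rw [hvm]; simp only; rw [hk, hdltj]; nlinarith
          · rw [hvm]; simp only [hk]; simpa using h1 k
        have hvpsum : ∑ k, vp k ≤ (s:ℝ) := by
          rw [hvp]
          rw [Finset.sum_add_distrib, ← Finset.mul_sum, hsumdlt]
          simpa using hsum
        have hvmsum : ∑ k, vm k ≤ (s:ℝ) := by
          rw [hvm]
          rw [Finset.sum_sub_distrib, ← Finset.mul_sum, hsumdlt]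
          simpa using hsum
        have hsubp : (univ.filter (fun k => vp k ≠ 0 ∧ vp k ≠ 1))
            ⊆ (univ.filter (fun k => v k ≠ 0 ∧ v k ≠ 1)) := by
          intro k hk
          simp only [Finset.mem_filter, Finset.mem_univ, true_and] at hk ⊢
          rcases hcases k with hk1 | hk1 | hk1
          · rw [hk1]; exact hi'
          · rw [hk1]; exact hj'
          · rw [hvp] at hk; simp only [hk1] at hk; simpa using hk
        have hsubm : (univ.filter (fun k => vm k ≠ 0 ∧ vm k ≠ 1))
            ⊆ (univ.filter (fun k => v k ≠ 0 ∧ v k ≠ 1)) := by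
          intro k hk
          simp only [Finset.mem_filter, Finset.mem_univ, true_and] at hk ⊢
          rcases hcases k with hk1 | hk1 | hk1
          · rw [hk1]; exact hi'
          · rw [hk1]; exact hj'
          · rw [hvm] at hk; simp only [hk1] at hk; simpa using hk
        have hcardp : (univ.filter (fun k => vp k ≠ 0 ∧ vp k ≠ 1)).card ≤ N := by
          have hss : (univ.filter (fun k => vp k ≠ 0 ∧ vp k ≠ 1))
              ⊂ (univ.filter (fun k => v k ≠ 0 ∧ v k ≠ 1)) := by
            rw [Finset.ssubset_iff_of_subset hsubp]
            rcases le_total (1 - v i) (v j) with h | h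
            · refine ⟨i, hi, ?_⟩
              have h1' : vp i = 1 := by
                rw [hvp]; simp only; rw [hdlti, ha, min_eq_left h]; ring
              simp [h1']
            · refine ⟨j, hjF, ?_⟩
              have h1' : vp j = 0 := by
                rw [hvp]; simp only; rw [hdltj, ha, min_eq_right h]; ring
              simp [h1']
          have := Finset.card_lt_card hss
          omega
        have hcardm : (univ.filter (fun k => vm k ≠ 0 ∧ vm k ≠ 1)).card ≤ N := by
          have hss : (univ.filter (fun k => vm k ≠ 0 ∧ vm k ≠ 1))
              ⊂ (univ.filter (fun k => v k ≠ 0 ∧ v k ≠ 1)) := by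
            rw [Finset.ssubset_iff_of_subset hsubm]
            rcases le_total (v i) (1 - v j) with h | h
            · refine ⟨i, hi, ?_⟩
              have h1' : vm i = 0 := by
                rw [hvm]; simp only; rw [hdlti, hb, min_eq_left h]; ring
              simp [h1']
            · refine ⟨j, hjF, ?_⟩
              have h1' : vm j = 1 := by
                rw [hvm]; simp only; rw [hdltj, hb, min_eq_right h]; ring
              simp [h1']
          have := Finset.card_lt_card hss
          omega
        have hmp := ih vp hcardp hvp0 hvp1 hvpsum
        have hmm := ih vm hcardm hvm0 hvm1 hvmsum
        have habpos : 0 < a + b := by linarith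
        have hab0 : a + b ≠ 0 := ne_of_gt habpos
        have hcomb : (b/(a+b)) • vp + (a/(a+b)) • vm = v := by
          funext k
          simp only [Pi.add_apply, Pi.smul_apply, smul_eq_mul, hvp, hvm]
          field_simp
          ring
        have := hconv hmp hmm (le_of_lt (div_pos hb0 habpos)) (le_of_lt (div_pos ha0 habpos))
          (by field_simp; ring)
        rwa [hcomb] at this
      · -- single fractional coordinate
        push_neg at hj
        have hint : ∀ k, k ≠ i → v k = 0 ∨ v k = 1 := by
          intro k hk
          by_contra hkk
          push_neg at hkk
          exact hk (hj k (by simp [hkk.1, hkk.2]))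
        set v0 : Fin d → ℝ := Function.update v i 0 with hv0
        set v1 : Fin d → ℝ := Function.update v i 1 with hv1
        have hsum0 : ∑ k, v0 k = ∑ k, v k - v i := by
          rw [hv0, Finset.sum_update_of_mem (Finset.mem_univ i)]
          have h' : ∑ k ∈ univ \ {i}, v k = ∑ k, v k - v i := by
            rw [Finset.sum_sdiff_eq_sub (by simp)]
            simp
          rw [h']; ring
        have hsum1 : ∑ k, v1 k = ∑ k, v k - v i + 1 := by
          rw [hv1, Finset.sum_update_of_mem (Finset.mem_univ i)]
          have h' : ∑ k ∈ univ \ {i}, v k = ∑ k, v k - v i := by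
            rw [Finset.sum_sdiff_eq_sub (by simp)]
            simp
          rw [h']; ring
        have hm0 : v0 ∈ {w : Fin d → ℝ | (∀ i, w i = 0 ∨ w i = 1) ∧ (∑ i, w i) ≤ (s : ℝ)} := by
          refine ⟨fun k => ?_, by rw [hsum0]; linarith⟩
          rcases eq_or_ne k i with hk | hk
          · left; rw [hv0, hk]; simp
          · rw [hv0, Function.update_of_ne hk]; exact hint k hk
        have hm1 : v1 ∈ {w : Fin d → ℝ | (∀ i, w i = 0 ∨ w i = 1) ∧ (∑ i, w i) ≤ (s : ℝ)} := by
          refine ⟨fun k => ?_, ?_⟩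
          · rcases eq_or_ne k i with hk | hk
            · right; rw [hv1, hk]; simp
            · rw [hv1, Function.update_of_ne hk]; exact hint k hk
          · rw [hsum1]
            have herase : ∑ k, v k - v i = ∑ k ∈ univ.erase i, v k := by
              rw [Finset.sum_erase_eq_sub (Finset.mem_univ i)]
            set q := ((univ.erase i).filter (fun k => v k = 1)).card with hq
            have hqv : ∑ k ∈ univ.erase i, v k = (q:ℝ) := by
              rw [hq]
              rw [← Finset.sum_filter_add_sum_filter_not (univ.erase i) (fun k => v k = 1) v]
              have h1' : ∑ k ∈ (univ.erase i).filter (fun k => v k = 1), v k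
                  = (((univ.erase i).filter (fun k => v k = 1)).card : ℝ) := by
                rw [Finset.sum_congr rfl (fun k hk => (Finset.mem_filter.1 hk).2)]
                simp
              have h2' : ∑ k ∈ (univ.erase i).filter (fun k => ¬ v k = 1), v k = 0 := by
                apply Finset.sum_eq_zero
                intro k hk
                have hk' := Finset.mem_filter.1 hk
                have hki : k ≠ i := (Finset.mem_erase.1 hk'.1).1
                rcases hint k hki with h | h
                · exact h
                · exact absurd h hk'.2
              rw [h1', h2', add_zero]
            have hqlt : (q:ℝ) < (s:ℝ) := by
              rw [← hqv, ← herase]; linarith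
            have hq2 : q < s := by exact_mod_cast hqlt
            have hq3 : (q:ℝ) + 1 ≤ (s:ℝ) := by exact_mod_cast hq2
            rw [herase, hqv]; linarith
        have hcv : (1 - v i) • v0 + (v i) • v1 = v := by
          funext k
          simp only [Pi.add_apply, Pi.smul_apply, smul_eq_mul, hv0, hv1]
          rcases eq_or_ne k i with hk | hk
          · rw [hk]; simp
          · rw [Function.update_of_ne hk, Function.update_of_ne hk]; ring
        have := hconv (subset_convexHull ℝ _ hm0) (subset_convexHull ℝ _ hm1)
          (by linarith : (0:ℝ) ≤ 1 - v i) (le_of_lt hi0) (by ring)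
        rwa [hcv] at this


lemma card_filter_Ico_fin (n a b : ℕ) (hbn : b ≤ n) :
    (univ.filter (fun i : Fin n => a ≤ (i:ℕ) ∧ (i:ℕ) < b)).card = b - a := by
  rw [← Nat.card_Ico a b]
  apply Finset.card_bij (fun (i : Fin n) _ => (i : ℕ))
  · intro i hi
    simp only [Finset.mem_filter] at hi
    simp [Finset.mem_Ico, hi.2.1, hi.2.2]
  · intro i _ j _ h
    exact Fin.ext h
  · intro m hm
    rw [Finset.mem_Ico] at hm
    exact ⟨⟨m, lt_of_lt_of_le hm.2 hbn⟩, by simp [hm.1, hm.2], rfl⟩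

/-- Sum of an antitone nonneg function over any set of cardinality at most `K`
is at most the sum over the first `K` indices. -/
lemma sum_le_topK {n K : ℕ} (hKn : K ≤ n) (g : Fin n → ℝ)
    (hmono : ∀ i j : Fin n, i ≤ j → g j ≤ g i) (hpos : ∀ i, 0 ≤ g i)
    (I : Finset (Fin n)) (hI : I.card ≤ K) :
    ∑ i ∈ I, g i ≤ ∑ i ∈ univ.filter (fun i : Fin n => (i : ℕ) < K), g i := by
  set F := univ.filter (fun i : Fin n => (i : ℕ) < K) with hF
  have hcardF : F.card = K := by
    rw [hF]
    have h1 : univ.filter (fun i : Fin n => (i : ℕ) < K)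
        = univ.filter (fun i : Fin n => 0 ≤ (i:ℕ) ∧ (i:ℕ) < K) :=
      Finset.filter_congr (fun i _ => by omega)
    rw [h1, card_filter_Ico_fin n 0 K hKn]; omega
  have hsplitI : ∑ i ∈ I, g i = ∑ i ∈ I ∩ F, g i + ∑ i ∈ I \ F, g i := by
    rw [Finset.sum_inter_add_sum_sdiff]
  have hsplitF : ∑ i ∈ F, g i = ∑ i ∈ F ∩ I, g i + ∑ i ∈ F \ I, g i := by
    rw [Finset.sum_inter_add_sum_sdiff]
  rw [hsplitI, hsplitF, Finset.inter_comm]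
  have hcard : (I \ F).card ≤ (F \ I).card := by
    have h1 := Finset.card_sdiff_add_card_inter I F
    have h2 := Finset.card_sdiff_add_card_inter F I
    rw [Finset.inter_comm] at h2
    omega
  have key : ∑ i ∈ I \ F, g i ≤ ∑ i ∈ F \ I, g i := by
    rcases Finset.eq_empty_or_nonempty (I \ F) with he | hne
    · rw [he]; simp
      exact Finset.sum_nonneg (fun i _ => hpos i)
    · have hFI : (F \ I).Nonempty := by
        rw [← Finset.card_pos]
        have := Finset.card_pos.2 hne
        omega
      obtain ⟨j0, hj0, hj0max⟩ := Finset.exists_max_image (F \ I) (fun i => (i:ℕ)) hFI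
      have hj0K : (j0 : ℕ) < K := by
        have := (Finset.mem_sdiff.1 hj0).1
        rw [hF] at this
        simpa using this
      have h1 : ∑ i ∈ I \ F, g i ≤ (I \ F).card • g j0 := by
        apply Finset.sum_le_card_nsmul
        intro i hii
        have hiK : ¬ ((i:ℕ) < K) := by
          have := (Finset.mem_sdiff.1 hii).2
          rw [hF] at this
          simpa using this
        exact hmono j0 i (by rw [Fin.le_def]; omega)
      have h2 : (F \ I).card • g j0 ≤ ∑ i ∈ F \ I, g i := by
        apply Finset.card_nsmul_le_sum
        intro i hii
        exact hmono i j0 (by rw [Fin.le_def]; exact hj0max i hii)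
      have h3 : (I \ F).card • g j0 ≤ (F \ I).card • g j0 := by
        rcases le_or_gt 0 (g j0) with h | h
        · exact nsmul_le_nsmul_left h hcard
        · exact absurd h (not_lt.2 (hpos j0))
      calc ∑ i ∈ I \ F, g i ≤ (I \ F).card • g j0 := h1
        _ ≤ (F \ I).card • g j0 := h3
        _ ≤ ∑ i ∈ F \ I, g i := h2
  linarith

theorem ksupport_norm_formula (n K : ℕ) (hK1 : 1 < K) (hKn : K < n) (x : Fin n → ℝ)
    (r : ℕ) (hr : r ≤ K - 1)
    (hcond1 : K - r - 1 = 0 ∨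
      (∑ j ∈ Finset.univ.filter (fun j : Fin n => K - r ≤ (j : ℕ) + 1),
          sortedDesc n (fun t => |x t|) j) / ((r : ℝ) + 1)
        < sortedDesc n (fun t => |x t|) ⟨K - r - 2, by omega⟩)
    (hcond2 : sortedDesc n (fun t => |x t|) ⟨K - r - 1, by omega⟩ ≤
      (∑ j ∈ Finset.univ.filter (fun j : Fin n => K - r ≤ (j : ℕ) + 1),
          sortedDesc n (fun t => |x t|) j) / ((r : ℝ) + 1)) :
    gauge (convexHull ℝ
        {y : Fin n → ℝ | Real.sqrt (∑ i, y i ^ 2) ≤ 1 ∧ suppCard n y ≤ K}) x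
      = Real.sqrt
          ((∑ i ∈ Finset.univ.filter (fun i : Fin n => (i : ℕ) + 1 ≤ K - r - 1),
              sortedDesc n (fun t => |x t|) i ^ 2)
            + (1 / ((r : ℝ) + 1)) *
              (∑ i ∈ Finset.univ.filter (fun i : Fin n => K - r ≤ (i : ℕ) + 1),
                sortedDesc n (fun t => |x t|) i) ^ 2) := by
  classical
  have hfil2 : Finset.univ.filter (fun j : Fin n => K - r ≤ (j : ℕ) + 1)
      = Finset.univ.filter (fun j : Fin n => K - r - 1 ≤ (j : ℕ)) :=
    Finset.filter_congr (fun i _ => by omega)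
  have hfil1 : Finset.univ.filter (fun i : Fin n => (i : ℕ) + 1 ≤ K - r - 1)
      = Finset.univ.filter (fun i : Fin n => (i : ℕ) < K - r - 1) :=
    Finset.filter_congr (fun i _ => by omega)
  rw [hfil2] at hcond1 hcond2 ⊢
  rw [hfil1]
  set p : ℕ := K - r - 1 with hpdef
  have hpn : p < n := by omega
  have hpK : p + (r + 1) = K := by omega
  set absx : Fin n → ℝ := fun t => |x t| with habsx
  set s : Fin n → ℝ := sortedDesc n absx with hsdef
  set e : Fin n ≃ Fin n := Fin.revPerm.trans (Tuple.sort absx) with hedef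
  have hse : ∀ i, s i = absx (e i) := fun i => rfl
  have hanti : ∀ i j : Fin n, i ≤ j → s j ≤ s i := by
    intro i j hij
    exact Tuple.monotone_sort absx (Fin.rev_le_rev.2 hij)
  have hs0 : ∀ i, 0 ≤ s i := fun i => abs_nonneg _
  set T : ℝ := ∑ j ∈ Finset.univ.filter (fun j : Fin n => p ≤ (j : ℕ)), s j with hTdef
  set H : ℝ := ∑ i ∈ Finset.univ.filter (fun i : Fin n => (i : ℕ) < p), s i ^ 2 with hHdef
  set A2 : ℝ := H + 1 / ((r : ℝ) + 1) * T ^ 2 with hA2def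
  set A : ℝ := Real.sqrt A2 with hAdef
  set m : ℝ := T / ((r : ℝ) + 1) with hmdef
  have hr1 : (0 : ℝ) < (r : ℝ) + 1 := by positivity
  have hT0 : 0 ≤ T := Finset.sum_nonneg fun i _ => hs0 i
  have hH0 : 0 ≤ H := Finset.sum_nonneg fun i _ => sq_nonneg _
  have hA20 : 0 ≤ A2 := by rw [hA2def]; positivity
  have hA0 : 0 ≤ A := Real.sqrt_nonneg _
  have hAsq : A ^ 2 = A2 := Real.sq_sqrt hA20
  have hm0 : 0 ≤ m := div_nonneg hT0 hr1.le
  have hTm : T = ((r : ℝ) + 1) * m := by rw [hmdef]; field_simp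
  have hA2m : A2 = H + ((r : ℝ) + 1) * m ^ 2 := by
    rw [hA2def, hTm]; field_simp
  have hcond2' : s ⟨p, hpn⟩ ≤ m := hcond2
  have htail : ∀ i : Fin n, p ≤ (i : ℕ) → s i ≤ m := by
    intro i hi
    exact le_trans (hanti ⟨p, hpn⟩ i (by rw [Fin.le_def]; exact hi)) hcond2'
  -- the subgradient weights
  set c : Fin n → ℝ := fun i => if (i : ℕ) < p then s i else m with hcdef
  have hc0 : ∀ i, 0 ≤ c i := by
    intro i; rw [hcdef]; dsimp only
    split
    · exact hs0 i
    · exact hm0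
  have hcanti : ∀ i j : Fin n, i ≤ j → c j ≤ c i := by
    intro i j hij
    rw [Fin.le_def] at hij
    rw [hcdef]; dsimp only
    by_cases hjp : (j : ℕ) < p
    · rw [if_pos hjp, if_pos (by omega)]
      exact hanti i j (by rw [Fin.le_def]; exact hij)
    · rw [if_neg hjp]
      by_cases hip : (i : ℕ) < p
      · rw [if_pos hip]
        have hp0 : p ≠ 0 := by omega
        rcases hcond1 with h | h
        · exact absurd h hp0
        · refine le_trans (le_of_lt h) (hanti i ⟨K - r - 2, by omega⟩ ?_)
          rw [Fin.le_def]; simp; omega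
      · rw [if_neg hip]
  have hchead : ∀ i : Fin n, (i : ℕ) < p → c i = s i := by
    intro i hi; rw [hcdef]; exact if_pos hi
  have hctail : ∀ i : Fin n, ¬ ((i : ℕ) < p) → c i = m := by
    intro i hi; rw [hcdef]; exact if_neg hi
  have hcKsum : ∑ i ∈ Finset.univ.filter (fun i : Fin n => (i : ℕ) < K), c i ^ 2
      = H + ((r : ℝ) + 1) * m ^ 2 := by
    rw [← Finset.sum_filter_add_sum_filter_not
      (Finset.univ.filter (fun i : Fin n => (i : ℕ) < K)) (fun i : Fin n => (i : ℕ) < p)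
      (fun i => c i ^ 2)]
    have h1 : (Finset.univ.filter (fun i : Fin n => (i : ℕ) < K)).filter
        (fun i : Fin n => (i : ℕ) < p) = Finset.univ.filter (fun i : Fin n => (i : ℕ) < p) := by
      rw [Finset.filter_filter]
      exact Finset.filter_congr (fun i _ => by omega)
    have h2 : (Finset.univ.filter (fun i : Fin n => (i : ℕ) < K)).filter
        (fun i : Fin n => ¬ (i : ℕ) < p) = Finset.univ.filter
        (fun i : Fin n => p ≤ (i : ℕ) ∧ (i : ℕ) < K) := by
      rw [Finset.filter_filter]
      exact Finset.filter_congr (fun i _ => by omega)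
    rw [h1, h2]
    have h3 : ∑ i ∈ Finset.univ.filter (fun i : Fin n => (i : ℕ) < p), c i ^ 2 = H := by
      rw [hHdef]
      apply Finset.sum_congr rfl
      intro i hi
      simp only [Finset.mem_filter] at hi
      rw [hchead i hi.2]
    have h4 : ∑ i ∈ Finset.univ.filter (fun i : Fin n => p ≤ (i : ℕ) ∧ (i : ℕ) < K), c i ^ 2
        = ((r : ℝ) + 1) * m ^ 2 := by
      have hconst : ∀ i ∈ Finset.univ.filter (fun i : Fin n => p ≤ (i : ℕ) ∧ (i : ℕ) < K),
          c i ^ 2 = m ^ 2 := by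
        intro i hi
        simp only [Finset.mem_filter] at hi
        rw [hctail i (by omega)]
      rw [Finset.sum_congr rfl hconst, Finset.sum_const,
        card_filter_Ico_fin n p K (le_of_lt hKn), nsmul_eq_mul]
      have : K - p = r + 1 := by omega
      rw [this]
      push_cast
      ring
    rw [h3, h4]
  -- transport of sums along the sorting bijection
  have hsum_univ : ∀ f : ℝ → ℝ, ∑ i, f (s i) = ∑ j, f (absx j) := by
    intro f
    exact Finset.sum_equiv e (fun i => by simp) (fun i _ => by rw [hse])
  have hxabs : ∀ j, absx j = s (e.symm j) := by
    intro j
    rw [hse, e.apply_symm_apply]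
  have htailT : ∑ j ∈ Finset.univ.filter
      (fun j : Fin n => p ≤ ((e.symm j : Fin n) : ℕ)), absx j = T := by
    rw [hTdef]
    exact (Finset.sum_equiv e (fun i => by simp) (fun i _ => by rw [hse])).symm
  have hheadH : ∑ j ∈ Finset.univ.filter
      (fun j : Fin n => ((e.symm j : Fin n) : ℕ) < p), x j ^ 2 = H := by
    rw [hHdef]
    refine (Finset.sum_equiv e (fun i => by simp) (fun i _ => ?_)).symm
    rw [hse, habsx]
    dsimp only
    rw [sq_abs]
  have hShcard : (Finset.univ.filter
      (fun j : Fin n => ((e.symm j : Fin n) : ℕ) < p)).card = p := by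
    have h0 : (Finset.univ.filter (fun i : Fin n => (i : ℕ) < p)).card
        = (Finset.univ.filter (fun j : Fin n => ((e.symm j : Fin n) : ℕ) < p)).card :=
      Finset.card_equiv e (fun i => by simp)
    have h1 : Finset.univ.filter (fun i : Fin n => (i : ℕ) < p)
        = Finset.univ.filter (fun i : Fin n => 0 ≤ (i : ℕ) ∧ (i : ℕ) < p) :=
      Finset.filter_congr (fun i _ => by omega)
    rw [← h0, h1, card_filter_Ico_fin n 0 p (le_of_lt hpn)]
    omega
  have hsuppCard : ∀ y : Fin n → ℝ,
      suppCard n y = (Finset.univ.filter (fun j : Fin n => y j ≠ 0)).card := by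
    intro y; unfold suppCard; congr
  set CC : Set (Fin n → ℝ) :=
    {y : Fin n → ℝ | Real.sqrt (∑ i, y i ^ 2) ≤ 1 ∧ suppCard n y ≤ K} with hCCdef
  -- signs
  set sg : Fin n → ℝ := fun j => if x j < 0 then -1 else 1 with hsgdef
  have hsgx : ∀ j, sg j * x j = absx j := by
    intro j; rw [hsgdef, habsx]; dsimp only
    by_cases h : x j < 0
    · rw [if_pos h, abs_of_neg h]; ring
    · rw [if_neg h, abs_of_nonneg (not_lt.1 h)]; ring
  have hsgabs : ∀ j, sg j * absx j = x j := by
    intro j; rw [hsgdef, habsx]; dsimp only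
    by_cases h : x j < 0
    · rw [if_pos h, abs_of_neg h]; ring
    · rw [if_neg h, abs_of_nonneg (not_lt.1 h)]; ring
  have hsg2 : ∀ j, sg j ^ 2 = 1 := by
    intro j; rw [hsgdef]; dsimp only
    by_cases h : x j < 0
    · rw [if_pos h]; norm_num
    · rw [if_neg h]; norm_num
  set z : Fin n → ℝ := fun j => sg j * c (e.symm j) with hzdef
  have hz2 : ∀ j, z j ^ 2 = c (e.symm j) ^ 2 := by
    intro j; rw [hzdef]; dsimp only; rw [mul_pow, hsg2]; ring
  -- φ x = A2
  have hphix : ∑ j, z j * x j = A2 := by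
    have h1 : ∀ j, z j * x j = c (e.symm j) * absx j := by
      intro j; rw [hzdef]; dsimp only
      rw [show sg j * c (e.symm j) * x j = c (e.symm j) * (sg j * x j) from by ring, hsgx j]
    rw [Finset.sum_congr rfl (fun j _ => h1 j)]
    have h2 : ∑ j, c (e.symm j) * absx j = ∑ i, c i * s i :=
      (Finset.sum_equiv e (fun i => by simp) (fun i _ => by rw [e.symm_apply_apply, hse])).symm
    rw [h2]
    rw [← Finset.sum_filter_add_sum_filter_not Finset.univ (fun i : Fin n => (i : ℕ) < p)
      (fun i => c i * s i)]
    have h3 : ∑ i ∈ Finset.univ.filter (fun i : Fin n => (i : ℕ) < p), c i * s i = H := by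
      rw [hHdef]
      apply Finset.sum_congr rfl
      intro i hi
      simp only [Finset.mem_filter] at hi
      rw [hchead i hi.2]; ring
    have h4 : ∑ i ∈ Finset.univ.filter (fun i : Fin n => ¬ (i : ℕ) < p), c i * s i
        = m * T := by
      have hset : Finset.univ.filter (fun i : Fin n => ¬ (i : ℕ) < p)
          = Finset.univ.filter (fun i : Fin n => p ≤ (i : ℕ)) :=
        Finset.filter_congr (fun i _ => by omega)
      rw [hset, hTdef, Finset.mul_sum]
      apply Finset.sum_congr rfl
      intro i hi
      simp only [Finset.mem_filter] at hi
      rw [hctail i (by omega)]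
    rw [h3, h4, hA2def, hmdef]
    field_simp
  -- φ y ≤ A on the base set
  have hphiC : ∀ y : Fin n → ℝ, Real.sqrt (∑ i, y i ^ 2) ≤ 1 → suppCard n y ≤ K →
      ∑ j, z j * y j ≤ A := by
    intro y hy1 hy2
    set Sy := Finset.univ.filter (fun j : Fin n => y j ≠ 0) with hSy
    have hstep1 : ∑ j, z j * y j = ∑ j ∈ Sy, z j * y j := by
      rw [hSy]
      exact (Finset.sum_filter_of_ne (fun j _ hj => right_ne_zero_of_mul hj)).symm
    have hstep2 := Real.sum_mul_le_sqrt_mul_sqrt Sy z y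
    have hz2sum : ∑ j ∈ Sy, z j ^ 2 ≤ A2 := by
      have h1 : ∑ j ∈ Sy, z j ^ 2 = ∑ i ∈ Sy.image e.symm, c i ^ 2 := by
        rw [Finset.sum_image (fun a _ b _ h => e.symm.injective h)]
        exact Finset.sum_congr rfl (fun j _ => hz2 j)
      rw [h1]
      have hycard : Sy.card ≤ K := by rw [hSy, ← hsuppCard]; exact hy2
      have hcard : (Sy.image e.symm).card ≤ K :=
        le_trans Finset.card_image_le hycard
      calc ∑ i ∈ Sy.image e.symm, c i ^ 2
          ≤ ∑ i ∈ Finset.univ.filter (fun i : Fin n => (i : ℕ) < K), c i ^ 2 := by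
            refine sum_le_topK (le_of_lt hKn) (fun i => c i ^ 2) ?_ (fun i => sq_nonneg _)
              _ hcard
            intro i j hij
            exact pow_le_pow_left₀ (hc0 j) (hcanti i j hij) 2
        _ = H + ((r : ℝ) + 1) * m ^ 2 := hcKsum
        _ = A2 := hA2m.symm
    have hy2sum : Real.sqrt (∑ j ∈ Sy, y j ^ 2) ≤ 1 := by
      refine le_trans (Real.sqrt_le_sqrt ?_) hy1
      apply Finset.sum_le_sum_of_subset_of_nonneg (Finset.subset_univ _)
      intro i _ _; exact sq_nonneg _
    calc ∑ j, z j * y j = ∑ j ∈ Sy, z j * y j := hstep1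
      _ ≤ Real.sqrt (∑ j ∈ Sy, z j ^ 2) * Real.sqrt (∑ j ∈ Sy, y j ^ 2) := hstep2
      _ ≤ A * 1 := by
          refine mul_le_mul ?_ hy2sum (Real.sqrt_nonneg _) hA0
          rw [hAdef]
          exact Real.sqrt_le_sqrt hz2sum
      _ = A := mul_one A
  have hconvexhalf : Convex ℝ {y : Fin n → ℝ | ∑ j, z j * y j ≤ A} := by
    intro y1 hy1 y2 hy2 a b ha hb hab
    simp only [Set.mem_setOf_eq] at hy1 hy2 ⊢
    have hlin : ∑ j, z j * (a • y1 + b • y2) j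
        = a * ∑ j, z j * y1 j + b * ∑ j, z j * y2 j := by
      rw [Finset.mul_sum, Finset.mul_sum, ← Finset.sum_add_distrib]
      apply Finset.sum_congr rfl
      intro j _
      simp only [Pi.add_apply, Pi.smul_apply, smul_eq_mul]; ring
    rw [hlin]
    have h1 := mul_le_mul_of_nonneg_left hy1 ha
    have h2 := mul_le_mul_of_nonneg_left hy2 hb
    nlinarith
  have hphiS : ∀ y ∈ convexHull ℝ CC, ∑ j, z j * y j ≤ A := by
    intro y hy
    exact convexHull_min (fun w hw => hphiC w hw.1 hw.2) hconvexhalf hy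
  have hlow : ∀ b : ℝ, 0 < b → x ∈ b • (convexHull ℝ CC : Set (Fin n → ℝ)) → A ≤ b := by
    intro b hb hxb
    obtain ⟨y, hyS, hxy⟩ := hxb
    have hyb : ∑ j, z j * x j = b * ∑ j, z j * y j := by
      rw [← hxy, Finset.mul_sum]
      apply Finset.sum_congr rfl
      intro j _
      simp only [Pi.smul_apply, smul_eq_mul]; ring
    have hle : A2 ≤ b * A := by
      rw [← hphix, hyb]
      exact mul_le_mul_of_nonneg_left (hphiS y hyS) hb.le
    rcases eq_or_lt_of_le hA0 with hA | hA
    · linarith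
    · nlinarith [hAsq]
  have hx0ofA : A = 0 → x = 0 := by
    intro hA
    have hA2z : A2 = 0 := by rw [← hAsq, hA]; norm_num
    have ht2 : 0 ≤ 1 / ((r : ℝ) + 1) * T ^ 2 := by positivity
    have hHz : H = 0 := by rw [hA2def] at hA2z; linarith
    have hT2 : T ^ 2 = 0 := by
      have h1 : 1 / ((r : ℝ) + 1) * T ^ 2 = 0 := by rw [hA2def] at hA2z; linarith
      have h2 : 1 / ((r : ℝ) + 1) ≠ 0 := by positivity
      exact (mul_eq_zero.1 h1).resolve_left h2
    have hTz : T = 0 := by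
      exact pow_eq_zero_iff (by norm_num) |>.1 hT2
    have hsz : ∀ i : Fin n, s i = 0 := by
      intro i
      by_cases hi : (i : ℕ) < p
      · have := (Finset.sum_eq_zero_iff_of_nonneg
          (fun i _ => sq_nonneg (s i))).1 hHz.symm.symm i (by simp [hi])
        exact pow_eq_zero_iff (by norm_num) |>.1 this
      · exact (Finset.sum_eq_zero_iff_of_nonneg (fun i _ => hs0 i)).1 hTz i (by simp; omega)
    funext j
    have : absx j = 0 := by rw [hxabs j]; exact hsz _
    rw [habsx] at this
    simpa using this
  -- Upper bound construction
  have hmem : A ≠ 0 → x ∈ A • (convexHull ℝ CC : Set (Fin n → ℝ)) := by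
    intro hAne
    have hApos : 0 < A := lt_of_le_of_ne hA0 (Ne.symm hAne)
    have hHA2 : H ≤ A2 := by
      have : 0 ≤ 1 / ((r : ℝ) + 1) * T ^ 2 := by positivity
      rw [hA2def]; linarith
    by_cases hm : m = 0
    · -- tail vanishes: x itself is K-sparse
      have htail0 : ∀ i : Fin n, p ≤ (i : ℕ) → s i = 0 := fun i hi =>
        le_antisymm (by rw [← hm]; exact htail i hi) (hs0 i)
      set y : Fin n → ℝ := A⁻¹ • x with hydef
      have hsupp : Finset.univ.filter (fun j : Fin n => y j ≠ 0)
          ⊆ Finset.univ.filter (fun j : Fin n => ((e.symm j : Fin n) : ℕ) < p) := by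
        intro j hj
        simp only [Finset.mem_filter, Finset.mem_univ, true_and] at hj ⊢
        by_contra hjp
        apply hj
        have hxj : absx j = 0 := by rw [hxabs j]; exact htail0 _ (by omega)
        rw [habsx] at hxj
        have hxz : x j = 0 := by simpa using hxj
        rw [hydef]
        simp [hxz]
      have hy2 : suppCard n y ≤ K := by
        have h1 := Finset.card_le_card hsupp
        rw [hShcard] at h1
        rw [hsuppCard]
        omega
      have hxsum : ∑ j, x j ^ 2 = H := by
        have h1 : ∑ j, x j ^ 2 = ∑ i, s i ^ 2 := by
          rw [hsum_univ (fun t => t ^ 2)]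
          apply Finset.sum_congr rfl
          intro j _
          rw [habsx]; dsimp only; rw [sq_abs]
        rw [h1, ← Finset.sum_filter_add_sum_filter_not Finset.univ
          (fun i : Fin n => (i : ℕ) < p) (fun i => s i ^ 2), hHdef]
        have h2 : ∑ i ∈ Finset.univ.filter (fun i : Fin n => ¬ (i : ℕ) < p), s i ^ 2 = 0 := by
          apply Finset.sum_eq_zero
          intro i hi
          simp only [Finset.mem_filter] at hi
          rw [htail0 i (by omega)]
          ring
        rw [h2, add_zero]
      have hy1 : Real.sqrt (∑ i, y i ^ 2) ≤ 1 := by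
        have hsum : ∑ i, y i ^ 2 = A⁻¹ ^ 2 * ∑ j, x j ^ 2 := by
          rw [hydef, Finset.mul_sum]
          apply Finset.sum_congr rfl
          intro j _
          simp only [Pi.smul_apply, smul_eq_mul]; ring
        have hle1 : ∑ i, y i ^ 2 ≤ 1 := by
          rw [hsum, hxsum]
          calc A⁻¹ ^ 2 * H ≤ A⁻¹ ^ 2 * A2 :=
              mul_le_mul_of_nonneg_left hHA2 (by positivity)
            _ = 1 := by rw [← hAsq]; field_simp
        calc Real.sqrt (∑ i, y i ^ 2) ≤ Real.sqrt 1 := Real.sqrt_le_sqrt hle1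
          _ = 1 := Real.sqrt_one
      refine Set.mem_smul_set.2 ⟨y, subset_convexHull ℝ _ ⟨hy1, hy2⟩, ?_⟩
      rw [hydef, smul_smul, mul_inv_cancel₀ hAne, one_smul]
    · -- m > 0 : use the capped cube decomposition on the tail
      have hmpos : 0 < m := lt_of_le_of_ne hm0 (Ne.symm hm)
      set v : Fin n → ℝ :=
        fun j => if p ≤ ((e.symm j : Fin n) : ℕ) then absx j / m else 0 with hvdef
      have hv0 : ∀ j, 0 ≤ v j := by
        intro j; rw [hvdef]; dsimp only
        split
        · exact div_nonneg (abs_nonneg _) hm0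
        · exact le_refl 0
      have hv1 : ∀ j, v j ≤ 1 := by
        intro j; rw [hvdef]; dsimp only
        split
        · rename_i hcase
          rw [div_le_one hmpos, hxabs j]
          exact htail _ hcase
        · norm_num
      have hvsum : ∑ j, v j = ((r + 1 : ℕ) : ℝ) := by
        have h1 : ∑ j, v j = ∑ j ∈ Finset.univ.filter
            (fun j : Fin n => p ≤ ((e.symm j : Fin n) : ℕ)), absx j / m := by
          rw [Finset.sum_filter]
        rw [h1, ← Finset.sum_div, htailT, hTm]
        push_cast
        field_simp
      have hvhull := mem_convexHull_boolean_cap n (r + 1)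
        ((Finset.univ.filter (fun i => v i ≠ 0 ∧ v i ≠ 1)).card) v le_rfl hv0 hv1
        (le_of_eq hvsum)
      set hfun : Fin n → ℝ := fun j => if ((e.symm j : Fin n) : ℕ) < p then x j else 0
        with hhdef
      set Phi : (Fin n → ℝ) → (Fin n → ℝ) := fun w j =>
        hfun j + (if p ≤ ((e.symm j : Fin n) : ℕ) then m * sg j * w j else 0) with hPhidef
      have hPhiv : Phi v = x := by
        funext j
        rw [hPhidef, hhdef, hvdef]; dsimp only
        by_cases hj : ((e.symm j : Fin n) : ℕ) < p
        · rw [if_pos hj, if_neg (by omega), add_zero]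
        · rw [if_neg hj, if_pos (by omega), if_pos (by omega)]
          rw [show m * sg j * (absx j / m) = sg j * absx j * (m / m) from by ring,
            div_self hm, mul_one, hsgabs j, zero_add]
      have hPhimem : ∀ w : Fin n → ℝ, (∀ i, w i = 0 ∨ w i = 1) →
          (∑ i, w i) ≤ ((r + 1 : ℕ) : ℝ) → Phi w ∈ A • (convexHull ℝ CC : Set (Fin n → ℝ)) := by
        intro w hw01 hwsum
        have hwnn : ∀ j, 0 ≤ w j := by
          intro j; rcases hw01 j with h | h <;> rw [h] <;> norm_num
        have hsumw : ∑ j, w j = ((Finset.univ.filter (fun j : Fin n => w j = 1)).card : ℝ) :=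
          sum_boolean Finset.univ w hw01
        have hqK : ((Finset.univ.filter (fun j : Fin n => w j = 1)).card : ℝ)
            ≤ (r : ℝ) + 1 := by
          rw [← hsumw]
          push_cast at hwsum
          linarith
        have hsupp : Finset.univ.filter (fun j : Fin n => Phi w j ≠ 0)
            ⊆ (Finset.univ.filter (fun j : Fin n => ((e.symm j : Fin n) : ℕ) < p))
              ∪ (Finset.univ.filter (fun j : Fin n => w j = 1)) := by
          intro j hj
          simp only [Finset.mem_filter, Finset.mem_univ, true_and, Finset.mem_union] at hj ⊢
          by_cases hjp : ((e.symm j : Fin n) : ℕ) < p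
          · exact Or.inl hjp
          · right
            rw [hPhidef, hhdef] at hj
            dsimp only at hj
            rw [if_neg hjp, if_pos (by omega), zero_add] at hj
            have hwj : w j ≠ 0 := by
              intro h0
              apply hj
              rw [h0]; ring
            exact (hw01 j).resolve_left hwj
        have hPhisum : ∑ j, Phi w j ^ 2 ≤ A2 := by
          rw [← Finset.sum_filter_add_sum_filter_not Finset.univ
            (fun j : Fin n => ((e.symm j : Fin n) : ℕ) < p) (fun j => Phi w j ^ 2)]
          have hhead : ∑ j ∈ Finset.univ.filter
              (fun j : Fin n => ((e.symm j : Fin n) : ℕ) < p), Phi w j ^ 2 = H := by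
            rw [← hheadH]
            apply Finset.sum_congr rfl
            intro j hj
            simp only [Finset.mem_filter] at hj
            rw [hPhidef, hhdef]; dsimp only
            rw [if_pos hj.2, if_neg (by omega), add_zero]
          have htailb : ∑ j ∈ Finset.univ.filter
              (fun j : Fin n => ¬ ((e.symm j : Fin n) : ℕ) < p), Phi w j ^ 2
              ≤ ((r : ℝ) + 1) * m ^ 2 := by
            have hterm : ∀ j ∈ Finset.univ.filter
                (fun j : Fin n => ¬ ((e.symm j : Fin n) : ℕ) < p),
                Phi w j ^ 2 = m ^ 2 * w j := by
              intro j hj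
              simp only [Finset.mem_filter] at hj
              rw [hPhidef, hhdef]; dsimp only
              rw [if_neg hj.2, if_pos (by omega), zero_add, mul_pow, mul_pow, hsg2, mul_one]
              have hwsq : w j ^ 2 = w j := by
                rcases hw01 j with h | h <;> rw [h] <;> norm_num
              rw [hwsq]
            rw [Finset.sum_congr rfl hterm, ← Finset.mul_sum]
            have hw_le : ∑ j ∈ Finset.univ.filter (fun j : Fin n => ¬ ((e.symm j : Fin n) : ℕ) < p), w j ≤ ∑ j, w j := by
              apply Finset.sum_le_sum_of_subset_of_nonneg (Finset.subset_univ _)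
              intro i _ _; exact hwnn i
            have hw_le2 : ∑ j ∈ Finset.univ.filter (fun j : Fin n => ¬ ((e.symm j : Fin n) : ℕ) < p), w j ≤ (r : ℝ) + 1 := by
              push_cast at hwsum
              linarith
            have := mul_le_mul_of_nonneg_left hw_le2 (sq_nonneg m)
            linarith
          rw [hA2m]
          exact add_le_add (le_of_eq hhead) htailb
        set y : Fin n → ℝ := A⁻¹ • Phi w with hydef
        have hy1 : Real.sqrt (∑ i, y i ^ 2) ≤ 1 := by
          have hsum : ∑ i, y i ^ 2 = A⁻¹ ^ 2 * ∑ j, Phi w j ^ 2 := by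
            rw [hydef, Finset.mul_sum]
            apply Finset.sum_congr rfl
            intro j _
            simp only [Pi.smul_apply, smul_eq_mul]; ring
          have hle1 : ∑ i, y i ^ 2 ≤ 1 := by
            rw [hsum]
            calc A⁻¹ ^ 2 * ∑ j, Phi w j ^ 2 ≤ A⁻¹ ^ 2 * A2 :=
                mul_le_mul_of_nonneg_left hPhisum (by positivity)
              _ = 1 := by rw [← hAsq]; field_simp
          calc Real.sqrt (∑ i, y i ^ 2) ≤ Real.sqrt 1 := Real.sqrt_le_sqrt hle1
            _ = 1 := Real.sqrt_one
        have hy2 : suppCard n y ≤ K := by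
          have hsub : Finset.univ.filter (fun j : Fin n => y j ≠ 0)
              ⊆ Finset.univ.filter (fun j : Fin n => Phi w j ≠ 0) := by
            intro j hj
            simp only [Finset.mem_filter, Finset.mem_univ, true_and] at hj ⊢
            intro h0
            apply hj
            rw [hydef]
            simp [h0]
          have h1 := Finset.card_le_card (hsub.trans hsupp)
          have h2 := Finset.card_union_le
            (Finset.univ.filter (fun j : Fin n => ((e.symm j : Fin n) : ℕ) < p))
            (Finset.univ.filter (fun j : Fin n => w j = 1))
          have h3 : ((Finset.univ.filter (fun j : Fin n => w j = 1)).card) ≤ r + 1 := by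
            exact_mod_cast hqK
          rw [hsuppCard]
          rw [hShcard] at h2
          omega
        refine Set.mem_smul_set.2 ⟨y, subset_convexHull ℝ _ ⟨hy1, hy2⟩, ?_⟩
        rw [hydef, smul_smul, mul_inv_cancel₀ hAne, one_smul]
      have hASconv : Convex ℝ (A • (convexHull ℝ CC : Set (Fin n → ℝ))) := (convex_convexHull ℝ CC).smul A
      have hPhiconv : Convex ℝ {w : Fin n → ℝ | Phi w ∈ A • (convexHull ℝ CC : Set (Fin n → ℝ))} := by
        intro w1 hw1 w2 hw2 a b ha hb hab
        simp only [Set.mem_setOf_eq] at hw1 hw2 ⊢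
        have hPhiaff : Phi (a • w1 + b • w2) = a • Phi w1 + b • Phi w2 := by
          funext j
          rw [hPhidef]; dsimp only
          simp only [Pi.add_apply, Pi.smul_apply, smul_eq_mul]
          have hb' : b = 1 - a := by linarith
          subst hb'
          by_cases hj : p ≤ ((e.symm j : Fin n) : ℕ)
          · simp only [if_pos hj]; ring
          · simp only [if_neg hj]; ring
        rw [hPhiaff]
        exact hASconv hw1 hw2 ha hb hab
      have hsubset : convexHull ℝ {w : Fin n → ℝ | (∀ i, w i = 0 ∨ w i = 1)
          ∧ (∑ i, w i) ≤ ((r + 1 : ℕ) : ℝ)}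
          ⊆ {w : Fin n → ℝ | Phi w ∈ A • (convexHull ℝ CC : Set (Fin n → ℝ))} := by
        apply convexHull_min _ hPhiconv
        intro w hw
        obtain ⟨hw1, hw2⟩ := hw
        exact hPhimem w hw1 hw2
      have := hsubset hvhull
      rw [← hPhiv]
      exact this
  -- Final assembly
  have hupper : gauge (convexHull ℝ CC) x ≤ A := by
    by_cases hA : A = 0
    · rw [hx0ofA hA, gauge_zero]; exact hA0
    · exact gauge_le_of_mem hA0 (hmem hA)
  have hlower : A ≤ gauge (convexHull ℝ CC) x := by
    by_cases hA : A = 0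
    · rw [hA]; exact gauge_nonneg x
    · have hApos : 0 < A := lt_of_le_of_ne hA0 (Ne.symm hA)
      have hnn : A ≤ sInf {t : ℝ | 0 < t ∧ x ∈ t • (convexHull ℝ CC : Set (Fin n → ℝ))} := by
        apply le_csInf
        · exact ⟨A, hApos, hmem hA⟩
        · rintro b ⟨hb0, hbx⟩
          exact hlow b hb0 hbx
      exact hnn
  exact le_antisymm hupper hlower
end

section
/- For S = {x ∈ ℝ^q : card(x) ≤ K, ‖x‖_∞ ≤ r} with 1 ≤ K ≤ q and r > 0, conv(S) = {x ∈ ℝ^q : ‖x‖₁ ≤ rK and ‖x‖_∞ ≤ r}. -/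
open Finset

lemma abs_add_mul_sign {a : ℝ} (ha : a ≠ 0) {t : ℝ} (ht : 0 ≤ t) :
    |a + t * Real.sign a| = |a| + t := by
  rcases ha.lt_or_gt with h | h
  · rw [Real.sign_of_neg h, abs_of_neg h, abs_of_neg (by linarith)]; ring
  · rw [Real.sign_of_pos h, abs_of_pos h, abs_of_pos (by linarith)]; ring

lemma abs_sub_mul_sign {a : ℝ} (ha : a ≠ 0) {t : ℝ} (_ht : 0 ≤ t) (ht' : t ≤ |a|) :
    |a - t * Real.sign a| = |a| - t := by
  rcases ha.lt_or_gt with h | h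
  · rw [abs_of_neg h] at ht'
    rw [Real.sign_of_neg h, abs_of_neg h, abs_of_nonpos (by linarith)]; ring
  · rw [abs_of_pos h] at ht'
    rw [Real.sign_of_pos h, abs_of_pos h, abs_of_nonneg (by linarith)]; ring

lemma move_lemma (q : ℕ) (r : ℝ) (x : Fin q → ℝ)
    (hbnd : ∀ k, |x k| ≤ r)
    (i j : Fin q) (hij : i ≠ j)
    (hi0 : x i ≠ 0) (hir : |x i| ≠ r) (hj0 : x j ≠ 0) (hjr : |x j| ≠ r)
    (t : ℝ) (ht0 : 0 < t) (hti : t ≤ r - |x i|) (htj : t ≤ |x j|)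
    (hend : t = r - |x i| ∨ t = |x j|)
    (y : Fin q → ℝ)
    (hy : ∀ k, y k = if k = i then x i + t * Real.sign (x i)
      else if k = j then x j - t * Real.sign (x j) else x k) :
    (∀ k, |y k| ≤ r) ∧ (∑ k, |y k|) = (∑ k, |x k|) ∧
      (Finset.univ.filter (fun k => y k ≠ 0 ∧ |y k| ≠ r)).card <
      (Finset.univ.filter (fun k => x k ≠ 0 ∧ |x k| ≠ r)).card := by
  have hyi : |y i| = |x i| + t := by
    rw [hy i, if_pos rfl]; exact abs_add_mul_sign hi0 ht0.le
  have hyj : |y j| = |x j| - t := by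
    rw [hy j, if_neg hij.symm, if_pos rfl]; exact abs_sub_mul_sign hj0 ht0.le htj
  have hyk : ∀ k, k ≠ i → k ≠ j → y k = x k := by
    intro k h1 h2; rw [hy k, if_neg h1, if_neg h2]
  refine ⟨?_, ?_, ?_⟩
  · intro k
    by_cases h1 : k = i
    · rw [h1, hyi]; linarith
    by_cases h2 : k = j
    · rw [h2, hyj]; have := hbnd j; linarith
    · rw [hyk k h1 h2]; exact hbnd k
  · have habs : ∀ k, |y k| = |x k| + ((if k = i then t else 0) + (if k = j then -t else 0)) := by
      intro k
      by_cases h1 : k = i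
      · subst h1; rw [hyi, if_pos rfl, if_neg hij]; ring
      by_cases h2 : k = j
      · subst h2; rw [hyj, if_neg h1, if_pos rfl]; ring
      · rw [hyk k h1 h2, if_neg h1, if_neg h2]; ring
    rw [Finset.sum_congr rfl fun k _ => habs k, Finset.sum_add_distrib,
      Finset.sum_add_distrib, Finset.sum_ite_eq' Finset.univ i (fun _ => t),
      Finset.sum_ite_eq' Finset.univ j (fun _ => (-t))]
    simp
  · have hsub : (Finset.univ.filter (fun k => y k ≠ 0 ∧ |y k| ≠ r)) ⊆
        (Finset.univ.filter (fun k => x k ≠ 0 ∧ |x k| ≠ r)) := by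
      intro k hk
      obtain ⟨-, hk1, hk2⟩ := Finset.mem_filter.mp hk
      refine Finset.mem_filter.mpr ⟨Finset.mem_univ _, ?_⟩
      by_cases h1 : k = i
      · subst h1; exact ⟨hi0, hir⟩
      by_cases h2 : k = j
      · subst h2; exact ⟨hj0, hjr⟩
      · rw [hyk k h1 h2] at hk1 hk2; exact ⟨hk1, hk2⟩
    have hne : ∃ k ∈ (Finset.univ.filter (fun k => x k ≠ 0 ∧ |x k| ≠ r)),
        k ∉ (Finset.univ.filter (fun k => y k ≠ 0 ∧ |y k| ≠ r)) := by
      rcases hend with h | h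
      · refine ⟨i, Finset.mem_filter.mpr ⟨Finset.mem_univ _, hi0, hir⟩, fun hmem => ?_⟩
        exact (Finset.mem_filter.mp hmem).2.2 (by rw [hyi, h]; ring)
      · refine ⟨j, Finset.mem_filter.mpr ⟨Finset.mem_univ _, hj0, hjr⟩, fun hmem => ?_⟩
        exact (Finset.mem_filter.mp hmem).2.1 (abs_eq_zero.mp (by rw [hyj, h]; ring))
    exact Finset.card_lt_card ((Finset.ssubset_iff_of_subset hsub).mpr hne)


lemma key (q K : ℕ) (r : ℝ) (hr : 0 < r) :
    ∀ n (x : Fin q → ℝ),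
      (Finset.univ.filter (fun i => x i ≠ 0 ∧ |x i| ≠ r)).card ≤ n →
      (∑ i, |x i|) ≤ r * K → (∀ i, |x i| ≤ r) →
      x ∈ convexHull ℝ {x : Fin q → ℝ | suppCard q x ≤ K ∧ ∀ i, |x i| ≤ r} := by
  intro n
  induction n with
  | zero =>
    intro x hF hsum hbnd
    apply subset_convexHull
    refine ⟨?_, hbnd⟩
    have hall : ∀ i, x i ≠ 0 → |x i| = r := by
      intro i hi
      by_contra h
      have hmem : i ∈ Finset.univ.filter (fun i => x i ≠ 0 ∧ |x i| ≠ r) :=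
        Finset.mem_filter.mpr ⟨Finset.mem_univ _, hi, h⟩
      have := Finset.card_pos.mpr ⟨i, hmem⟩
      omega
    have h1 : ∑ i ∈ Finset.univ.filter (fun i => x i ≠ 0), |x i| = ∑ i, |x i| :=
      Finset.sum_filter_of_ne (fun i _ h => abs_ne_zero.mp h)
    have h2 : ∑ i ∈ Finset.univ.filter (fun i => x i ≠ 0), |x i|
        = (suppCard q x : ℝ) * r := by
      rw [Finset.sum_congr rfl (fun i hi => hall i (Finset.mem_filter.mp hi).2),
        Finset.sum_const, nsmul_eq_mul]
      rfl
    have h3 : (suppCard q x : ℝ) * r ≤ (K : ℝ) * r := by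
      rw [← h2, h1]; linarith [hsum]
    have := le_of_mul_le_mul_right h3 hr
    exact_mod_cast this
  | succ n ih =>
    intro x hF hsum hbnd
    by_cases hs : suppCard q x ≤ K
    · exact subset_convexHull ℝ _ ⟨hs, hbnd⟩
    push_neg at hs
    set Fr := Finset.univ.filter (fun k => x k ≠ 0 ∧ |x k| ≠ r) with hFrdef
    have h2le : 2 ≤ Fr.card := by
      by_contra h
      push_neg at h
      set N := Finset.univ.filter (fun k => x k ≠ 0) with hNdef
      have hNcard : K < N.card := hs
      have hFrN : Fr ⊆ N := fun k hk =>
        Finset.mem_filter.mpr ⟨Finset.mem_univ _, (Finset.mem_filter.mp hk).2.1⟩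
      have hsplit : ∑ k ∈ N \ Fr, |x k| + ∑ k ∈ Fr, |x k| = ∑ k ∈ N, |x k| :=
        Finset.sum_sdiff hFrN
      have hNd : ∀ k ∈ N \ Fr, |x k| = r := by
        intro k hk
        obtain ⟨hkN, hkFr⟩ := Finset.mem_sdiff.mp hk
        have hk0 : x k ≠ 0 := (Finset.mem_filter.mp hkN).2
        by_contra hkr
        exact hkFr (Finset.mem_filter.mpr ⟨Finset.mem_univ _, hk0, hkr⟩)
      have hsd : ∑ k ∈ N \ Fr, |x k| = ((N \ Fr).card : ℝ) * r := by
        rw [Finset.sum_congr rfl hNd, Finset.sum_const, nsmul_eq_mul]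
      have hcard_sdiff : (N \ Fr).card = N.card - Fr.card := Finset.card_sdiff_of_subset hFrN
      have hFrle : Fr.card ≤ N.card := Finset.card_le_card hFrN
      have hsumN : ∑ k ∈ N, |x k| = ∑ k, |x k| :=
        Finset.sum_filter_of_ne (fun i _ h => abs_ne_zero.mp h)
      have hFr0 : 0 ≤ ∑ k ∈ Fr, |x k| := Finset.sum_nonneg fun k _ => abs_nonneg _
      interval_cases hc : Fr.card
      · have hcc : (K + 1 : ℝ) ≤ ((N \ Fr).card : ℝ) := by
          have : K + 1 ≤ (N \ Fr).card := by omega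
          exact_mod_cast this
        have hge : ((K : ℝ) + 1) * r ≤ ∑ k ∈ N \ Fr, |x k| := by
          rw [hsd]; nlinarith
        nlinarith [hsum, hsumN, hsplit, hge, hFr0]
      · obtain ⟨i₀, hFr⟩ := Finset.card_eq_one.mp hc
        have hi₀ : i₀ ∈ Fr := by rw [hFr]; exact Finset.mem_singleton_self _
        have hi₀pos : 0 < |x i₀| := abs_pos.mpr (Finset.mem_filter.mp hi₀).2.1
        have hKle : (K : ℝ) ≤ ((N \ Fr).card : ℝ) := by
          have : K ≤ (N \ Fr).card := by omega
          exact_mod_cast this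
        have hge : (K : ℝ) * r ≤ ∑ k ∈ N \ Fr, |x k| := by
          rw [hsd]; nlinarith
        have hFrsum : ∑ k ∈ Fr, |x k| = |x i₀| := by rw [hFr]; simp
        nlinarith [hsum, hsumN, hsplit, hge, hFrsum, hi₀pos]
    obtain ⟨i, hiFr, j, hjFr, hij⟩ := Finset.one_lt_card.mp (by omega : 1 < Fr.card)
    obtain ⟨hi0, hir⟩ := (Finset.mem_filter.mp hiFr).2
    obtain ⟨hj0, hjr⟩ := (Finset.mem_filter.mp hjFr).2
    have hia : 0 < |x i| := abs_pos.mpr hi0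
    have hja : 0 < |x j| := abs_pos.mpr hj0
    have hir' : |x i| < r := lt_of_le_of_ne (hbnd i) hir
    have hjr' : |x j| < r := lt_of_le_of_ne (hbnd j) hjr
    set t := min (r - |x i|) |x j| with htdef
    set s := min |x i| (r - |x j|) with hsdef
    have ht0 : 0 < t := lt_min (by linarith) hja
    have hs0 : 0 < s := lt_min hia (by linarith)
    set y : Fin q → ℝ := fun k => if k = i then x i + t * Real.sign (x i)
      else if k = j then x j - t * Real.sign (x j) else x k with hydef
    set z : Fin q → ℝ := fun k => if k = j then x j + s * Real.sign (x j)
      else if k = i then x i - s * Real.sign (x i) else x k with hzdef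
    obtain ⟨hyb, hysum, hycard⟩ := move_lemma q r x hbnd i j hij hi0 hir hj0 hjr
      t ht0 (min_le_left _ _) (min_le_right _ _) (min_choice _ _) y (fun k => rfl)
    obtain ⟨hzb, hzsum, hzcard⟩ := move_lemma q r x hbnd j i hij.symm hj0 hjr hi0 hir
      s hs0 (min_le_right _ _) (min_le_left _ _) ((min_choice _ _).symm) z (fun k => rfl)
    rw [← hFrdef] at hycard hzcard
    have hy_mem := ih y (by omega) (by rw [hysum]; exact hsum) hyb
    have hz_mem := ih z (by omega) (by rw [hzsum]; exact hsum) hzb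
    have hT : t + s ≠ 0 := by positivity
    have hxy : x = (s / (t + s)) • y + (t / (t + s)) • z := by
      funext k
      simp only [Pi.add_apply, Pi.smul_apply, smul_eq_mul, hydef, hzdef]
      by_cases h1 : k = i
      · rw [h1, if_pos rfl, if_neg hij, if_pos rfl]
        field_simp; ring
      by_cases h2 : k = j
      · rw [h2, if_neg hij.symm, if_pos rfl, if_pos rfl]
        field_simp; ring
      · rw [if_neg h1, if_neg h2, if_neg h2, if_neg h1]
        field_simp; ring
    rw [hxy]
    exact (convex_convexHull ℝ _) hy_mem hz_mem (by positivity) (by positivity)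
      (by field_simp; ring)


theorem convexHull_card_linf_ball (q K : ℕ) (hK1 : 1 ≤ K) (hKq : K ≤ q)
    (r : ℝ) (hr : 0 < r) :
    convexHull ℝ {x : Fin q → ℝ | suppCard q x ≤ K ∧ ∀ i, |x i| ≤ r}
      = {x : Fin q → ℝ | (∑ i, |x i|) ≤ r * K ∧ ∀ i, |x i| ≤ r} := by
  apply Set.Subset.antisymm
  · apply convexHull_min
    · rintro x ⟨hcard, hbnd⟩
      refine ⟨?_, hbnd⟩
      have h1 : ∑ i ∈ Finset.univ.filter (fun i => x i ≠ 0), |x i| = ∑ i, |x i| :=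
        Finset.sum_filter_of_ne (fun i _ h => abs_ne_zero.mp h)
      have h2 : ∑ i ∈ Finset.univ.filter (fun i => x i ≠ 0), |x i|
          ≤ (suppCard q x : ℝ) * r := by
        calc ∑ i ∈ Finset.univ.filter (fun i => x i ≠ 0), |x i|
            ≤ ∑ _i ∈ Finset.univ.filter (fun i => x i ≠ 0), r :=
              Finset.sum_le_sum fun i _ => hbnd i
          _ = (suppCard q x : ℝ) * r := by
              rw [Finset.sum_const, nsmul_eq_mul]; rfl
      have h3 : (suppCard q x : ℝ) ≤ (K : ℝ) := by exact_mod_cast hcard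
      calc ∑ i, |x i| ≤ (suppCard q x : ℝ) * r := by rw [← h1]; exact h2
        _ ≤ (K : ℝ) * r := mul_le_mul_of_nonneg_right h3 hr.le
        _ = r * K := mul_comm _ _
    · intro u hu v hv a b ha hb hab
      have hterm : ∀ i, |(a • u + b • v) i| ≤ a * |u i| + b * |v i| := by
        intro i
        simp only [Pi.add_apply, Pi.smul_apply, smul_eq_mul]
        calc |a * u i + b * v i| ≤ |a * u i| + |b * v i| := abs_add_le _ _
          _ = a * |u i| + b * |v i| := by
              rw [abs_mul, abs_mul, abs_of_nonneg ha, abs_of_nonneg hb]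
      constructor
      · have hstep : ∑ i, |(a • u + b • v) i| ≤ ∑ i, (a * |u i| + b * |v i|) :=
          Finset.sum_le_sum fun i _ => hterm i
        have heq : ∑ i, (a * |u i| + b * |v i|)
            = a * ∑ i, |u i| + b * ∑ i, |v i| := by
          rw [Finset.sum_add_distrib, Finset.mul_sum, Finset.mul_sum]
        have hle : a * ∑ i, |u i| + b * ∑ i, |v i| ≤ a * (r * K) + b * (r * K) :=
          add_le_add (mul_le_mul_of_nonneg_left hu.1 ha)
            (mul_le_mul_of_nonneg_left hv.1 hb)
        have : a * (r * K) + b * (r * K) = r * K := by rw [← add_mul, hab, one_mul]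
        linarith
      · intro i
        have hle : a * |u i| + b * |v i| ≤ a * r + b * r :=
          add_le_add (mul_le_mul_of_nonneg_left (hu.2 i) ha)
            (mul_le_mul_of_nonneg_left (hv.2 i) hb)
        have : a * r + b * r = r := by rw [← add_mul, hab, one_mul]
        linarith [hterm i]
  · rintro x ⟨h1, h2⟩
    exact key q K r hr _ x le_rfl h1 h2
end
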